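/- arXiv:1809.00001 — 3 statements merged into one kernel-verified Lean document; each statement's English description precedes it below -/
import Mathlib

section
/- For every integer n ≥ 2 and every assignment of real numbers x_1, …, x_n, the sum over all vertex-labeled trees T on the vertex set {1, …, n} of the monomial ∏_{i=1}^n x_i^{d_T(i)} equals (∏_{i=1}^n x_i) · (∑_{i=1}^n x_i)^{n-2}. -/
open scoped Classical

/-- The degree of vertex `i` in the simple graph `G`. -/
noncomputable def treeDeg {n : ℕ} (G : SimpleGraph (Fin n)) (i : Fin n) : ℕ :=
  Nat.card (G.neighborSet i)

/-- The finite set of vertex-labeled trees on `{0, …, n-1}`: simple graphs on `Fin n`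
that are connected and acyclic. -/
noncomputable def treeFinset (n : ℕ) : Finset (SimpleGraph (Fin n)) :=
  Finset.univ.filter (fun G => G.IsTree)

open SimpleGraph Finset

variable {V : Type*} {G : SimpleGraph V}

/-- Two distinct neighbors at the start of a cycle. -/
lemma cycle_two_neighbors {v : V} (c : G.Walk v v) (hc : c.IsCycle) :
    ∃ a b, a ≠ b ∧ G.Adj v a ∧ G.Adj v b := by
  cases c with
  | nil => exact absurd hc (by simp)
  | @cons _ x _ h q =>
    have hxv : x ≠ v := fun e => G.loopless.irrefl v (e ▸ h)
    obtain ⟨y, hr, r', hre⟩ := SimpleGraph.Walk.not_nil_iff.1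
      (SimpleGraph.Walk.not_nil_of_ne (fun e => hxv e.symm) (p := q.reverse))
    refine ⟨x, y, ?_, h, hr⟩
    intro hxy
    have hmem : s(v, y) ∈ q.edges := by
      have : s(v, y) ∈ q.reverse.edges := by rw [hre]; simp
      simpa [SimpleGraph.Walk.edges_reverse] using this
    have htrail := hc.isTrail.edges_nodup
    rw [SimpleGraph.Walk.edges_cons] at htrail
    subst hxy; exact (List.nodup_cons.1 htrail).1 hmem

/-- Two distinct neighbors of an internal vertex of a path. -/
lemma path_internal_two_neighbors {u w v : V} (p : G.Walk u w) (hp : p.IsPath)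
    (hv : v ∈ p.support) (hu : v ≠ u) (hw : v ≠ w) :
    ∃ a b, a ≠ b ∧ G.Adj v a ∧ G.Adj v b := by
  induction p with
  | nil => simp at hv; exact absurd hv hu
  | @cons a x b h q ih =>
    rw [SimpleGraph.Walk.support_cons, List.mem_cons] at hv
    rcases hv with rfl | hv
    · exact absurd rfl hu
    · by_cases hvx : v = x
      · subst hvx
        obtain ⟨y, hy, q', hq'⟩ := SimpleGraph.Walk.not_nil_iff.1
          (SimpleGraph.Walk.not_nil_of_ne hw (p := q))
        refine ⟨a, y, ?_, h.symm, hy⟩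
        intro hay
        have hnd := hp.support_nodup
        rw [SimpleGraph.Walk.support_cons, List.nodup_cons] at hnd
        apply hnd.1
        rw [hq', hay]
        simp
      · exact ih hp.of_cons hv (fun e => hvx e) hw

lemma connected_exists_adj (hc : G.Connected) {v u : V} (hne : v ≠ u) : ∃ a, G.Adj v a := by
  obtain ⟨p⟩ := hc.preconnected v u
  cases p with
  | nil => exact absurd rfl hne
  | cons h q => exact ⟨_, h⟩

lemma walk_lift {α β : Type*} {G : SimpleGraph β} (f : α → β) (hf : Function.Injective f) :
    ∀ {a b : β} (p : G.Walk a b), (∀ s ∈ p.support, ∃ x, f x = s) → ∀ a' b', f a' = a → f b' = b →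
    ∃ q : (G.comap f).Walk a' b', q.support.map f = p.support ∧
      q.edges.map (Sym2.map f) = p.edges := by
  intro a b p
  induction p with
  | nil =>
    intro _ a' b' ha hb
    obtain rfl : a' = b' := hf (ha.trans hb.symm)
    subst ha
    exact ⟨SimpleGraph.Walk.nil, by simp, by simp⟩
  | @cons a c b h p' ih =>
    intro hsup a' b' ha hb
    obtain ⟨x, hx⟩ := hsup c (by simp)
    have hadj : (G.comap f).Adj a' x := by simp [ha, hx, h]
    obtain ⟨q', hq1, hq2⟩ := ih (fun s hs => hsup s (by simp [hs])) x b' hx hb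
    exact ⟨SimpleGraph.Walk.cons hadj q', by simp [hq1, ha], by simp [hq2, ha, hx]⟩

lemma treeDeg_eq_ncard {n : ℕ} (G : SimpleGraph (Fin n)) (i : Fin n) :
    treeDeg G i = (G.neighborSet i).ncard := Nat.card_coe_set_eq _

lemma adj_eq_of_treeDeg_one {n : ℕ} {G : SimpleGraph (Fin n)} {v a b : Fin n}
    (h : treeDeg G v = 1) (ha : G.Adj v a) (hb : G.Adj v b) : a = b := by
  rw [treeDeg_eq_ncard] at h
  obtain ⟨c, hc⟩ := (Set.ncard_eq_one).1 h
  have h1 : a ∈ G.neighborSet v := ha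
  have h2 : b ∈ G.neighborSet v := hb
  rw [hc] at h1 h2
  simp at h1 h2
  exact h1.trans h2.symm

lemma treeDeg_pos {n : ℕ} {G : SimpleGraph (Fin n)} (hc : G.Connected) {v u : Fin n}
    (hne : v ≠ u) : 1 ≤ treeDeg G v := by
  obtain ⟨a, ha⟩ := connected_exists_adj hc hne
  have : (G.neighborSet v).Nonempty := ⟨a, ha⟩
  rw [treeDeg_eq_ncard]
  exact this.ncard_pos (Set.toFinite _)

lemma leaf_not_mem_path_support {n : ℕ} {G : SimpleGraph (Fin n)} {v u w : Fin n}
    (h1 : treeDeg G v = 1) {p : G.Walk u w} (hp : p.IsPath) (hu : v ≠ u) (hw : v ≠ w) :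
    v ∉ p.support := by
  intro hv
  obtain ⟨a, b, hab, ha, hb⟩ := path_internal_two_neighbors p hp hv hu hw
  exact hab (adj_eq_of_treeDeg_one h1 ha hb)

lemma leaf_not_mem_cycle_support {n : ℕ} {G : SimpleGraph (Fin n)} {v z : Fin n}
    (h1 : treeDeg G v = 1) {c : G.Walk z z} (hc : c.IsCycle) : v ∉ c.support := by
  intro hv
  obtain ⟨a, b, hab, ha, hb⟩ := cycle_two_neighbors (c.rotate v hv) (hc.rotate hv)
  exact hab (adj_eq_of_treeDeg_one h1 ha hb)

lemma comap_isAcyclic {α β : Type*} {G : SimpleGraph β} (f : α → β)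
    (hf : Function.Injective f) (hG : G.IsAcyclic) : (G.comap f).IsAcyclic := by
  intro z c hc
  let hom : (G.comap f) →g G := ⟨f, fun h => h⟩
  exact hG (c.map hom) (hc.map (f := hom) hf)

/-- Attach a new leaf `v` to the vertex `v.succAbove j` of `T'` (reindexed along
`v.succAbove`). -/
def addLeaf {m : ℕ} (T' : SimpleGraph (Fin (m + 1))) (v : Fin (m + 2)) (j : Fin (m + 1)) :
    SimpleGraph (Fin (m + 2)) where
  Adj a b := (∃ a' b', T'.Adj a' b' ∧ v.succAbove a' = a ∧ v.succAbove b' = b) ∨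
    (a = v ∧ b = v.succAbove j) ∨ (a = v.succAbove j ∧ b = v)
  symm := by
    constructor
    rintro a b (⟨a', b', h, rfl, rfl⟩ | ⟨rfl, rfl⟩ | ⟨rfl, rfl⟩)
    · exact Or.inl ⟨b', a', h.symm, rfl, rfl⟩
    · exact Or.inr (Or.inr ⟨rfl, rfl⟩)
    · exact Or.inr (Or.inl ⟨rfl, rfl⟩)
  loopless := by
    constructor
    rintro a (⟨a', b', h, ha, hb⟩ | ⟨h1, h2⟩ | ⟨h1, h2⟩)
    · exact h.ne (Fin.succAbove_right_injective (ha.trans hb.symm))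
    · exact Fin.succAbove_ne v j (h2.symm.trans h1)
    · exact Fin.succAbove_ne v j (h1.symm.trans h2)

lemma addLeaf_adj {m : ℕ} (T' : SimpleGraph (Fin (m + 1))) (v : Fin (m + 2))
    (j : Fin (m + 1)) (a b : Fin (m + 2)) :
    (addLeaf T' v j).Adj a b ↔
      ((∃ a' b', T'.Adj a' b' ∧ v.succAbove a' = a ∧ v.succAbove b' = b) ∨
        (a = v ∧ b = v.succAbove j) ∨ (a = v.succAbove j ∧ b = v)) := Iff.rfl

lemma comap_addLeaf {m : ℕ} (T' : SimpleGraph (Fin (m + 1))) (v : Fin (m + 2))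
    (j : Fin (m + 1)) : (addLeaf T' v j).comap v.succAbove = T' := by
  ext a b
  rw [SimpleGraph.comap_adj, addLeaf_adj]
  constructor
  · rintro (⟨a', b', h, ha, hb⟩ | ⟨ha, _⟩ | ⟨_, hb⟩)
    · rwa [Fin.succAbove_right_injective ha, Fin.succAbove_right_injective hb] at h
    · exact absurd ha (Fin.succAbove_ne v a)
    · exact absurd hb (Fin.succAbove_ne v b)
  · intro h
    exact Or.inl ⟨a, b, h, rfl, rfl⟩

lemma addLeaf_adj_v {m : ℕ} (T' : SimpleGraph (Fin (m + 1))) (v : Fin (m + 2))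
    (j : Fin (m + 1)) (b : Fin (m + 2)) :
    (addLeaf T' v j).Adj v b ↔ b = v.succAbove j := by
  rw [addLeaf_adj]
  constructor
  · rintro (⟨a', b', h, ha, hb⟩ | ⟨_, hb⟩ | ⟨ha, hb⟩)
    · exact absurd ha (Fin.succAbove_ne v a')
    · exact hb
    · exact absurd ha.symm (Fin.succAbove_ne v j)
  · rintro rfl
    exact Or.inr (Or.inl ⟨rfl, rfl⟩)

lemma addLeaf_neighborSet_v {m : ℕ} (T' : SimpleGraph (Fin (m + 1))) (v : Fin (m + 2))
    (j : Fin (m + 1)) : (addLeaf T' v j).neighborSet v = {v.succAbove j} := by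
  ext b; simpa [SimpleGraph.neighborSet] using addLeaf_adj_v T' v j b

lemma treeDeg_addLeaf_v {m : ℕ} (T' : SimpleGraph (Fin (m + 1))) (v : Fin (m + 2))
    (j : Fin (m + 1)) : treeDeg (addLeaf T' v j) v = 1 := by
  rw [treeDeg_eq_ncard, addLeaf_neighborSet_v, Set.ncard_singleton]

lemma addLeaf_neighborSet_succAbove {m : ℕ} (T' : SimpleGraph (Fin (m + 1))) (v : Fin (m + 2))
    (j : Fin (m + 1)) (i : Fin (m + 1)) :
    (addLeaf T' v j).neighborSet (v.succAbove i) =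
      v.succAbove '' (T'.neighborSet i) ∪ (if i = j then {v} else ∅) := by
  ext b
  simp only [SimpleGraph.mem_neighborSet, Set.mem_union, Set.mem_image]
  rw [addLeaf_adj]
  constructor
  · rintro (⟨a', b', h, ha, rfl⟩ | ⟨ha, hb⟩ | ⟨ha, hb⟩)
    · exact Or.inl ⟨b', by rwa [Fin.succAbove_right_injective ha] at h, rfl⟩
    · exact absurd ha (Fin.succAbove_ne v i)
    · obtain rfl : i = j := Fin.succAbove_right_injective ha
      simp [hb]
  · rintro (⟨b', h, rfl⟩ | hb)
    · exact Or.inl ⟨i, b', h, rfl, rfl⟩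
    · split at hb
      · rename_i hij
        rw [Set.mem_singleton_iff] at hb
        exact Or.inr (Or.inr ⟨by rw [hij], hb⟩)
      · exact absurd hb (Set.notMem_empty b)

lemma treeDeg_addLeaf_succAbove {m : ℕ} (T' : SimpleGraph (Fin (m + 1))) (v : Fin (m + 2))
    (j : Fin (m + 1)) (i : Fin (m + 1)) :
    treeDeg (addLeaf T' v j) (v.succAbove i) = treeDeg T' i + (if i = j then 1 else 0) := by
  rw [treeDeg_eq_ncard, treeDeg_eq_ncard, addLeaf_neighborSet_succAbove]
  rw [Set.ncard_union_eq, Set.ncard_image_of_injective _ Fin.succAbove_right_injective]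
  · congr 1
    split <;> simp
  · rw [Set.disjoint_right]
    intro b hb hbim
    obtain ⟨b', _, hb'⟩ := hbim
    split at hb
    · rw [Set.mem_singleton_iff] at hb
      exact Fin.succAbove_ne v b' (hb'.trans hb)
    · exact Set.notMem_empty b hb

lemma lifted_cycle {m : ℕ} {G : SimpleGraph (Fin (m + 2))} {v : Fin (m + 2)} {z : Fin (m + 2)}
    {z' : Fin (m + 1)} {c : G.Walk z z} (hc : c.IsCycle)
    {q : (G.comap v.succAbove).Walk z' z'}
    (hq1 : q.support.map v.succAbove = c.support)
    (hq2 : q.edges.map (Sym2.map v.succAbove) = c.edges) : q.IsCycle := by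
  refine ⟨⟨⟨?_⟩, ?_⟩, ?_⟩
  · have := hc.isCircuit.isTrail.edges_nodup
    rw [← hq2] at this
    exact this.of_map _
  · intro hqnil
    have h3 := hc.three_le_length
    have : c.edges = [] := by rw [← hq2, hqnil]; simp
    have hlen := SimpleGraph.Walk.length_edges c
    rw [‹c.edges = []›] at hlen
    simp at hlen
    omega
  · have hnd := hc.support_nodup
    have h1 : q.support.map v.succAbove = v.succAbove z' :: q.support.tail.map v.succAbove := by
      rw [SimpleGraph.Walk.support_eq_cons q]; simp only [List.map_cons, List.tail_cons]
    rw [h1, SimpleGraph.Walk.support_eq_cons c] at hq1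
    have h2 : q.support.tail.map v.succAbove = c.support.tail := (List.cons_eq_cons.1 hq1).2
    rw [← h2] at hnd
    exact hnd.of_map _

lemma addLeaf_isTree {m : ℕ} (T' : SimpleGraph (Fin (m + 1))) (v : Fin (m + 2))
    (j : Fin (m + 1)) (hT' : T'.IsTree) : (addLeaf T' v j).IsTree := by
  constructor
  · rw [SimpleGraph.connected_iff]
    refine ⟨?_, ⟨v⟩⟩
    have key : ∀ a : Fin (m + 2), (addLeaf T' v j).Reachable a v := by
      intro a
      by_cases hav : a = v
      · rw [hav]
      · obtain ⟨a', rfl⟩ := Fin.exists_succAbove_eq hav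
        let hom : T' →g addLeaf T' v j :=
          ⟨v.succAbove, fun h => Or.inl ⟨_, _, h, rfl, rfl⟩⟩
        have h1 : (addLeaf T' v j).Reachable (v.succAbove a') (v.succAbove j) :=
          (hT'.isConnected.preconnected a' j).map hom
        exact h1.trans (SimpleGraph.Adj.reachable (Or.inr (Or.inr ⟨rfl, rfl⟩)))
    exact fun a b => (key a).trans (key b).symm
  · intro z c hc
    by_cases hv : v ∈ c.support
    · exact leaf_not_mem_cycle_support (treeDeg_addLeaf_v T' v j) hc hv
    · have hz : z ≠ v := fun e => hv (e ▸ c.start_mem_support)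
      obtain ⟨z', hz'⟩ := Fin.exists_succAbove_eq hz
      obtain ⟨q, hq1, hq2⟩ := walk_lift v.succAbove Fin.succAbove_right_injective c
        (fun s hs => Fin.exists_succAbove_eq (fun e => hv (e ▸ hs))) z' z' hz' hz'
      have hqc := lifted_cycle hc hq1 hq2
      have hacy : ((addLeaf T' v j).comap v.succAbove).IsAcyclic := by
        rw [comap_addLeaf]; exact hT'.IsAcyclic
      exact hacy q hqc

lemma removeLeaf_isTree {m : ℕ} {T : SimpleGraph (Fin (m + 2))} (hT : T.IsTree)
    {v : Fin (m + 2)} (h1 : treeDeg T v = 1) : (T.comap v.succAbove).IsTree := by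
  constructor
  · rw [SimpleGraph.connected_iff]
    refine ⟨fun a' b' => ?_, ⟨0⟩⟩
    obtain ⟨w⟩ := hT.isConnected.preconnected (v.succAbove a') (v.succAbove b')
    let p := w.toPath
    have hv : v ∉ (p : T.Walk _ _).support :=
      leaf_not_mem_path_support h1 p.isPath (Fin.ne_succAbove v a') (Fin.ne_succAbove v b')
    obtain ⟨q, _, _⟩ := walk_lift v.succAbove Fin.succAbove_right_injective (p : T.Walk _ _)
      (fun s hs => Fin.exists_succAbove_eq (fun e => absurd hs (by rw [e]; exact hv)))
      a' b' rfl rfl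
    exact ⟨q⟩
  · exact comap_isAcyclic _ Fin.succAbove_right_injective hT.IsAcyclic

lemma eq_addLeaf_of_leaf {m : ℕ} {T : SimpleGraph (Fin (m + 2))} (hT : T.IsTree)
    {v : Fin (m + 2)} (h1 : treeDeg T v = 1) :
    ∃ j : Fin (m + 1), T = addLeaf (T.comap v.succAbove) v j := by
  obtain ⟨u, hu⟩ : ∃ u, T.Adj v u := by
    obtain ⟨w, hw⟩ := exists_ne v
    exact connected_exists_adj hT.isConnected (Ne.symm hw)
  obtain ⟨j, hj⟩ := Fin.exists_succAbove_eq hu.ne'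
  refine ⟨j, ?_⟩
  ext a b
  rw [addLeaf_adj]
  constructor
  · intro hab
    by_cases hav : a = v
    · have hub : u = b := adj_eq_of_treeDeg_one h1 hu (hav ▸ hab)
      exact Or.inr (Or.inl ⟨hav, by rw [← hub, ← hj]⟩)
    · by_cases hbv : b = v
      · have hua : u = a := adj_eq_of_treeDeg_one h1 hu ((hbv ▸ hab).symm)
        exact Or.inr (Or.inr ⟨by rw [← hua, ← hj], hbv⟩)
      · obtain ⟨a', ha'⟩ := Fin.exists_succAbove_eq hav
        obtain ⟨b', hb'⟩ := Fin.exists_succAbove_eq hbv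
        exact Or.inl ⟨a', b', by rw [SimpleGraph.comap_adj, ha', hb']; exact hab, ha', hb'⟩
  · rintro (⟨a', b', h, ha, hb⟩ | ⟨ha, hb⟩ | ⟨ha, hb⟩)
    · rw [← ha, ← hb]; exact h
    · rw [ha, hb, hj]; exact hu
    · rw [ha, hb, hj]; exact hu.symm

noncomputable def degCount (n : ℕ) (d : Fin n → ℕ) : ℕ :=
  ((Finset.univ : Finset (SimpleGraph (Fin n))).filter
    (fun G => G.IsTree ∧ treeDeg G = d)).card

lemma treeDeg_pos' {n : ℕ} {G : SimpleGraph (Fin n)} (hn : 2 ≤ n) (hc : G.Connected)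
    (v : Fin n) : 1 ≤ treeDeg G v := by
  haveI : Nontrivial (Fin n) := ⟨⟨⟨0, by omega⟩, ⟨1, by omega⟩, by simp [Fin.ext_iff]⟩⟩
  obtain ⟨u, hu⟩ := exists_ne v
  exact treeDeg_pos hc (Ne.symm hu)

lemma card_sigma_eq {m : ℕ} (d : Fin (m + 3) → ℕ) (v : Fin (m + 3)) (hv1 : d v = 1) :
    degCount (m + 3) d =
      ∑ j : Fin (m + 2), degCount (m + 2)
        (fun i => d (v.succAbove i) - if i = j then 1 else 0) := by
  classical
  simp only [degCount]
  rw [← Finset.card_sigma]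
  refine (Finset.card_bij
    (i := fun (p : (_ : Fin (m+2)) × SimpleGraph (Fin (m+2))) _ => addLeaf p.2 v p.1)
    ?_ ?_ ?_).symm
  · rintro ⟨j, T'⟩ hp
    rw [Finset.mem_sigma, Finset.mem_filter] at hp
    obtain ⟨-, -, hT', hdeg⟩ := hp
    rw [Finset.mem_filter]
    refine ⟨Finset.mem_univ _, addLeaf_isTree T' v j hT', funext fun i' => ?_⟩
    rcases eq_or_ne i' v with rfl | hne
    · rw [treeDeg_addLeaf_v, hv1]
    · obtain ⟨i, rfl⟩ := Fin.exists_succAbove_eq hne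
      rw [treeDeg_addLeaf_succAbove]
      have h1 : treeDeg T' i = d (v.succAbove i) - if i = j then 1 else 0 := by
        rw [hdeg]
      have h2 : 1 ≤ treeDeg T' i := treeDeg_pos' (by omega) hT'.isConnected i
      split <;> (rw [h1] at h2 ⊢; split at h2 <;> simp_all <;> omega)
  · rintro ⟨j1, T1⟩ h1 ⟨j2, T2⟩ h2 heq
    have hj : j1 = j2 := by
      have := congrArg (fun G => SimpleGraph.neighborSet G v) heq
      simp only [addLeaf_neighborSet_v] at this
      exact Fin.succAbove_right_injective (Set.singleton_eq_singleton_iff.1 this)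
    subst hj
    have hT : T1 = T2 := by
      have := congrArg (fun G => G.comap v.succAbove) heq
      simpa only [comap_addLeaf] using this
    rw [hT]
  · intro T hT
    rw [Finset.mem_filter] at hT
    obtain ⟨-, hTtree, hdeg⟩ := hT
    have h1 : treeDeg T v = 1 := by rw [hdeg, hv1]
    obtain ⟨j, hj⟩ := eq_addLeaf_of_leaf hTtree h1
    have hT' := removeLeaf_isTree hTtree h1
    refine ⟨⟨j, T.comap v.succAbove⟩, ?_, hj.symm⟩
    rw [Finset.mem_sigma, Finset.mem_filter]
    refine ⟨Finset.mem_univ _, Finset.mem_univ _, hT', funext fun i => ?_⟩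
    have h2 : treeDeg T (v.succAbove i) =
        treeDeg (T.comap v.succAbove) i + if i = j then 1 else 0 := by
      conv_lhs => rw [hj]
      rw [treeDeg_addLeaf_succAbove]
    rw [hdeg] at h2
    show treeDeg (T.comap v.succAbove) i = d (v.succAbove i) - if i = j then 1 else 0
    omega

lemma isAcyclic_of_card_le_two {n : ℕ} (hn : n ≤ 2) (G : SimpleGraph (Fin n)) : G.IsAcyclic := by
  intro z c hc
  have h3 := hc.three_le_length
  have hnd := hc.support_nodup
  have hle := hnd.length_le_card
  have h1 : c.support.tail.length = c.length := by
    rw [List.length_tail, SimpleGraph.Walk.length_support]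
    omega
  simp only [Fintype.card_fin] at hle
  omega

lemma isTree_fin2 (G : SimpleGraph (Fin 2)) : G.IsTree ↔ G = ⊤ := by
  constructor
  · intro h
    ext a b
    simp only [SimpleGraph.top_adj]
    constructor
    · exact fun hab => hab.ne
    · intro hne
      obtain ⟨c, hc⟩ := connected_exists_adj h.isConnected hne
      have : c = b := by
        have h1 := hc.ne'
        fin_cases a <;> fin_cases b <;> fin_cases c <;> simp_all
      rwa [this] at hc
  · rintro rfl
    exact ⟨SimpleGraph.connected_top, isAcyclic_of_card_le_two (le_refl 2) _⟩

lemma treeDeg_top_fin2 (i : Fin 2) : treeDeg (⊤ : SimpleGraph (Fin 2)) i = 1 := by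
  have : (⊤ : SimpleGraph (Fin 2)).neighborSet i = {i + 1} := by
    ext b
    simp only [SimpleGraph.mem_neighborSet, SimpleGraph.top_adj, Set.mem_singleton_iff]
    fin_cases i <;> fin_cases b <;> simp_all
  rw [treeDeg_eq_ncard, this, Set.ncard_singleton]

lemma count_mul : ∀ m : ℕ, ∀ d : Fin (m + 2) → ℕ, (∀ i, 1 ≤ d i) →
    (∑ i, d i = 2 * (m + 1)) →
    degCount (m + 2) d * ∏ i, (d i - 1).factorial = m.factorial := by
  intro m
  induction m with
  | zero =>
    intro d hd hsum
    rw [Fin.sum_univ_two] at hsum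
    have h0 : d 0 = 1 := by have := hd 0; have := hd 1; omega
    have h1 : d 1 = 1 := by have := hd 0; have := hd 1; omega
    have hdeq : d = fun _ => 1 := funext fun i => by fin_cases i <;> assumption
    subst hdeq
    have hset : ((Finset.univ : Finset (SimpleGraph (Fin 2))).filter
        (fun G => G.IsTree ∧ treeDeg G = fun _ => 1)) = {⊤} := by
      ext G
      simp only [Finset.mem_filter, Finset.mem_univ, true_and, Finset.mem_singleton]
      constructor
      · rintro ⟨ht, -⟩
        exact (isTree_fin2 G).1 ht
      · rintro rfl
        exact ⟨(isTree_fin2 ⊤).2 rfl, funext fun i => treeDeg_top_fin2 i⟩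
    rw [degCount, hset]
    simp
  | succ m ih =>
    intro d hd hsum
    obtain ⟨v, hv1⟩ : ∃ v, d v = 1 := by
      by_contra hcon
      push_neg at hcon
      have h2 : ∀ i, 2 ≤ d i := fun i => by have := hd i; have := hcon i; omega
      have := Finset.sum_le_sum (fun i (_ : i ∈ Finset.univ) => h2 i)
      simp only [Finset.sum_const, Finset.card_univ, Fintype.card_fin, smul_eq_mul] at this
      omega
    rw [card_sigma_eq d v hv1, Finset.sum_mul]
    have hsplit := Fin.sum_univ_succAbove d v
    rw [hsum] at hsplit
    have hssum : ∑ i : Fin (m + 2), d (v.succAbove i) = 2 * (m + 2) - 1 := by omega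
    have hprodsplit := Fin.prod_univ_succAbove (fun i => (d i - 1).factorial) v
    have hterm : ∀ j : Fin (m + 2),
        degCount (m + 2) (fun i => d (v.succAbove i) - if i = j then 1 else 0) *
          ∏ i, (d i - 1).factorial = m.factorial * (d (v.succAbove j) - 1) := by
      intro j
      set d' : Fin (m + 2) → ℕ := fun i => d (v.succAbove i) - if i = j then 1 else 0 with hd'
      by_cases hdj : 2 ≤ d (v.succAbove j)
      · have hpos : ∀ i, 1 ≤ d' i := by
          intro i
          show 1 ≤ d (v.succAbove i) - if i = j then 1 else 0
          have h1 := hd (v.succAbove i)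
          split <;> rename_i h
          · rw [h]; omega
          · omega
        have hsum' : ∑ i, d' i = 2 * (m + 1) := by
          have hadd : ∀ i, d' i + (if i = j then 1 else 0) = d (v.succAbove i) := by
            intro i
            show (d (v.succAbove i) - if i = j then 1 else 0) + (if i = j then 1 else 0) =
              d (v.succAbove i)
            have h1 := hd (v.succAbove i)
            split <;> rename_i h
            · rw [h]; omega
            · omega
          have := Finset.sum_congr rfl (fun i (_ : i ∈ Finset.univ) => (hadd i).symm)
          rw [Finset.sum_add_distrib] at this
          simp only [Finset.sum_ite_eq', Finset.mem_univ, if_true] at this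
          omega
        have hih := ih d' hpos hsum'
        rw [hprodsplit, hv1]
        simp only [Nat.sub_self, Nat.factorial_zero, one_mul]
        have hj1 : (d (v.succAbove j) - 1).factorial =
            (d' j - 1).factorial * (d (v.succAbove j) - 1) := by
          have hjj : d' j = d (v.succAbove j) - 1 := by
            show d (v.succAbove j) - (if j = j then 1 else 0) = d (v.succAbove j) - 1
            simp
          have h2 : d (v.succAbove j) - 1 = (d (v.succAbove j) - 2) + 1 := by omega
          rw [hjj, h2, Nat.factorial_succ, Nat.add_sub_cancel]
          ring
        have hprod : ∏ i : Fin (m + 2), (d (v.succAbove i) - 1).factorial =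
            (∏ i, (d' i - 1).factorial) * (d (v.succAbove j) - 1) := by
          rw [← Finset.mul_prod_erase Finset.univ _ (Finset.mem_univ j),
            ← Finset.mul_prod_erase Finset.univ (fun i => (d' i - 1).factorial)
              (Finset.mem_univ j), hj1]
          have herase : ∏ i ∈ Finset.univ.erase j, (d (v.succAbove i) - 1).factorial =
              ∏ i ∈ Finset.univ.erase j, (d' i - 1).factorial := by
            apply Finset.prod_congr rfl
            intro i hi
            show (d (v.succAbove i) - 1).factorial =
              (d (v.succAbove i) - (if i = j then 1 else 0) - 1).factorial
            rw [if_neg (Finset.mem_erase.1 hi).1, Nat.sub_zero]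
          rw [herase]; ring
        rw [hprod, ← mul_assoc, hih]
      · have hj1 : d (v.succAbove j) = 1 := by have := hd (v.succAbove j); omega
        have hzero : degCount (m + 2) d' = 0 := by
          rw [degCount, Finset.card_eq_zero, Finset.filter_eq_empty_iff]
          rintro G -
          rintro ⟨hG, hdeg⟩
          have hp := treeDeg_pos' (by omega) hG.isConnected j
          rw [hdeg] at hp
          have hp2 : 1 ≤ d (v.succAbove j) - if j = j then 1 else 0 := hp
          simp [hj1] at hp2
        rw [hzero, hj1]
        simp
    rw [Finset.sum_congr rfl (fun j _ => hterm j)]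
    rw [← Finset.mul_sum]
    have hfin : ∑ j : Fin (m + 2), (d (v.succAbove j) - 1) = m + 1 := by
      have hadd : ∀ j : Fin (m + 2), (d (v.succAbove j) - 1) + 1 = d (v.succAbove j) := by
        intro j
        have := hd (v.succAbove j)
        omega
      have := Finset.sum_congr rfl
        (fun j (_ : j ∈ (Finset.univ : Finset (Fin (m + 2)))) => (hadd j).symm)
      rw [Finset.sum_add_distrib] at this
      simp only [Finset.sum_const, Finset.card_univ, Fintype.card_fin, smul_eq_mul,
        mul_one] at this
      omega
    rw [hfin, Nat.factorial_succ, mul_comm]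

lemma sum_treeDeg_tree {m : ℕ} {G : SimpleGraph (Fin (m + 2))} (hG : G.IsTree) :
    ∑ i, treeDeg G i = 2 * (m + 1) := by
  classical
  have h1 : ∀ i, treeDeg G i = G.degree i := by
    intro i
    rw [treeDeg, Nat.card_eq_fintype_card]
    exact G.card_neighborSet_eq_degree i
  rw [Finset.sum_congr rfl (fun i _ => h1 i), SimpleGraph.sum_degrees_eq_twice_card_edges]
  have h2 := hG.card_edgeFinset
  rw [Fintype.card_fin] at h2
  omega

/-- Weighted Cayley formula: the sum over all vertex-labeled trees `T` on `n` vertices of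
`∏ i, x i ^ d_T(i)` equals `(∏ i, x i) * (∑ i, x i) ^ (n - 2)`. -/
theorem weighted_cayley (n : ℕ) (hn : 2 ≤ n) (x : Fin n → ℝ) :
    ∑ T ∈ treeFinset n, ∏ i, x i ^ treeDeg T i =
      (∏ i, x i) * (∑ i, x i) ^ (n - 2) := by
  obtain ⟨m, rfl⟩ : ∃ m, n = m + 2 := ⟨n - 2, by omega⟩
  have hpos : ∀ T ∈ treeFinset (m + 2), ∀ i, 1 ≤ treeDeg T i := by
    intro T hT i
    rw [treeFinset, Finset.mem_filter] at hT
    exact treeDeg_pos' (by omega) hT.2.isConnected i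
  have hmaps : ∀ T ∈ treeFinset (m + 2),
      (fun i => treeDeg T i - 1) ∈ Finset.piAntidiag Finset.univ m := by
    intro T hT
    rw [Finset.mem_piAntidiag]
    refine ⟨?_, fun i _ => Finset.mem_univ i⟩
    have hsum : ∑ i, treeDeg T i = 2 * (m + 1) := by
      rw [treeFinset, Finset.mem_filter] at hT
      exact sum_treeDeg_tree hT.2
    have hp := hpos T hT
    have hkey : (∑ i, (treeDeg T i - 1)) + (m + 2) = 2 * (m + 1) := by
      have h0 : (∑ i : Fin (m + 2), ((treeDeg T i - 1) + 1)) =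
          (∑ i, (treeDeg T i - 1)) + (m + 2) := by
        rw [Finset.sum_add_distrib]
        simp
      have h1 : (∑ i : Fin (m + 2), ((treeDeg T i - 1) + 1)) = ∑ i, treeDeg T i :=
        Finset.sum_congr rfl (fun i _ => by have := hp i; omega)
      rw [← h0, h1]
      exact hsum
    omega
  rw [← Finset.sum_fiberwise_of_maps_to hmaps, Nat.add_sub_cancel,
    Finset.sum_pow_eq_sum_piAntidiag, Finset.mul_sum]
  apply Finset.sum_congr rfl
  intro k hk
  rw [Finset.mem_piAntidiag] at hk
  have hk1 := hk.1
  -- inner sum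
  have hfiber : (treeFinset (m + 2)).filter (fun T => (fun i => treeDeg T i - 1) = k) =
      (Finset.univ : Finset (SimpleGraph (Fin (m + 2)))).filter
        (fun G => G.IsTree ∧ treeDeg G = fun i => k i + 1) := by
    rw [treeFinset, Finset.filter_filter]
    apply Finset.filter_congr
    intro T _
    constructor
    · rintro ⟨hT, hdk⟩
      refine ⟨hT, funext fun i => ?_⟩
      have h1 : treeDeg T i - 1 = k i := congrFun hdk i
      have h2 : 1 ≤ treeDeg T i :=
        treeDeg_pos' (by omega) hT.isConnected i
      omega
    · rintro ⟨hT, hdk⟩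
      refine ⟨hT, funext fun i => ?_⟩
      rw [hdk]
      simp
  have hterm : ∀ T ∈ (treeFinset (m + 2)).filter
      (fun T => (fun i => treeDeg T i - 1) = k),
      ∏ i, x i ^ treeDeg T i = ∏ i, x i ^ (k i + 1) := by
    intro T hT
    rw [Finset.mem_filter] at hT
    apply Finset.prod_congr rfl
    intro i _
    have h1 : treeDeg T i - 1 = k i := congrFun hT.2 i
    have h2 : 1 ≤ treeDeg T i := hpos T hT.1 i
    have : treeDeg T i = k i + 1 := by omega
    rw [this]
  rw [Finset.sum_congr rfl hterm, Finset.sum_const, hfiber]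
  have hcount : (((Finset.univ : Finset (SimpleGraph (Fin (m + 2)))).filter
      (fun G => G.IsTree ∧ treeDeg G = fun i => k i + 1)).card : ℕ) =
      Nat.multinomial Finset.univ k := by
    have hc := count_mul m (fun i => k i + 1) (fun i => by show 1 ≤ k i + 1; omega) (by
      have hkey : (∑ i, (k i + 1)) = (∑ i : Fin (m + 2), k i) + (m + 2) := by
        rw [Finset.sum_add_distrib]
        simp
      have hk2 : (∑ i : Fin (m + 2), k i) = m := hk1
      rw [hkey, hk2]
      ring)
    have hspec := Nat.multinomial_spec Finset.univ k
    rw [hk.1] at hspec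
    simp only [Nat.add_sub_cancel] at hc
    rw [degCount] at hc
    have hppos : 0 < ∏ i, (k i).factorial :=
      Finset.prod_pos (fun i _ => Nat.factorial_pos _)
    apply Nat.eq_of_mul_eq_mul_right hppos
    rw [hc, ← hspec]
    ring
  rw [hcount, nsmul_eq_mul]
  have hprodsplit : ∏ i, x i ^ (k i + 1) = (∏ i, x i) * ∏ i, x i ^ k i := by
    rw [← Finset.prod_mul_distrib]
    apply Finset.prod_congr rfl
    intro i _
    rw [pow_succ]
    ring
  rw [hprodsplit]
  ring
end

section
/- For every integer n ≥ 2 and every assignment of real numbers x_1, …, x_n, the sum over all vertex-labeled trees T on {1, …, n} of ∏_{i=1}^n [x_i(x_i+1)(x_i+2)⋯(x_i+d_T(i)−1)] equals (∏_{i=1}^n x_i) · ∏_{j=n}^{2n−3}((∑_{i=1}^n x_i) + j). (In the paper's notation the left factor at vertex i is the generalized binomial binom(x_i+d_T(i)−1, x_i−1) and the right-hand side is ∏ x_i · binom(∑x_i + 2n−3, ∑x_i + n−1).) -/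
open scoped Classical

/-- The ascending factorial `x (x+1) ⋯ (x+m-1)` with `m` factors (equal to `1` when `m = 0`). -/
noncomputable def ascFac (x : ℝ) (m : ℕ) : ℝ :=
  ∏ j ∈ Finset.range m, (x + j)

section Auxiliary

noncomputable def cnt {m n : ℕ} (f : Fin m → Fin n) (i : Fin n) : ℕ :=
  (Finset.univ.filter fun k => f k = i).card

lemma sum_cnt {m n : ℕ} (f : Fin m → Fin n) : ∑ i, cnt f i = m := by
  have h := Finset.card_eq_sum_card_fiberwise (s := (Finset.univ : Finset (Fin m)))
    (t := Finset.univ) (f := f) (by simp)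
  simpa [cnt] using h.symm

open SimpleGraph

lemma treeDeg_eq_degree {m : ℕ} (G : SimpleGraph (Fin m)) (i : Fin m) :
    treeDeg G i = G.degree i := by
  rw [treeDeg, Nat.card_eq_fintype_card, ← card_neighborSet_eq_degree]

/-- number of edges, instance-free -/
noncomputable def en {m : ℕ} (G : SimpleGraph (Fin m)) : ℕ := G.edgeSet.ncard

lemma en_eq_card {m : ℕ} (G : SimpleGraph (Fin m)) : en G = G.edgeFinset.card := by
  rw [en, Set.ncard_eq_toFinset_card' ]; simp [SimpleGraph.edgeFinset]

lemma sum_degree_eq {m : ℕ} (G : SimpleGraph (Fin m)) : ∑ i, G.degree i = 2 * en G := by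
  rw [en_eq_card]; exact G.sum_degrees_eq_twice_card_edges

lemma tree_en {m : ℕ} {G : SimpleGraph (Fin m)} (h : G.IsTree) : en G + 1 = m := by
  rw [en_eq_card]
  simpa using h.card_edgeFinset

/-- deleting an edge -/
lemma en_delete {m : ℕ} {G : SimpleGraph (Fin m)} {a b : Fin m} (hab : G.Adj a b) :
    en (G \ fromEdgeSet {s(a,b)}) + 1 = en G := by
  have hE : (G \ fromEdgeSet {s(a,b)}).edgeSet = G.edgeSet \ {s(a,b)} := by
    rw [edgeSet_sdiff, edgeSet_fromEdgeSet, edgeSet_sdiff_sdiff_isDiag]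
  rw [en, en, hE]
  rw [Set.ncard_diff_singleton_of_mem (G.mem_edgeSet.mpr hab)]
  have : 1 ≤ G.edgeSet.ncard := by
    rw [Nat.one_le_iff_ne_zero]
    intro h0
    have : G.edgeSet = ∅ := by
      have := Set.ncard_eq_zero (s := G.edgeSet) (Set.toFinite _)
      exact this.mp h0
    exact (this ▸ hab : s(a,b) ∈ (∅ : Set (Sym2 (Fin m))))
  omega

lemma connected_delete {m : ℕ} {G : SimpleGraph (Fin m)} {a b : Fin m}
    (hc : G.Connected) (hr : (G \ fromEdgeSet {s(a,b)}).Reachable a b) :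
    (G \ fromEdgeSet {s(a,b)}).Connected := by
  set H := G \ fromEdgeSet {s(a,b)} with hH
  have hadj : ∀ {u w : Fin m}, G.Adj u w → H.Reachable u w := by
    intro u w huw
    by_cases he : s(u,w) = s(a,b)
    · rw [Sym2.eq_iff] at he
      rcases he with ⟨rfl, rfl⟩ | ⟨rfl, rfl⟩
      · exact hr
      · exact hr.symm
    · exact Adj.reachable (by rw [hH, sdiff_adj]
                              exact ⟨huw, fun h2 => he ((fromEdgeSet_adj _).mp h2).1⟩)
  have key : ∀ {u w : Fin m}, G.Walk u w → H.Reachable u w := by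
    intro u w p
    induction p with
    | nil => exact Reachable.refl _
    | cons h q ih => exact (hadj h).trans ih
  have hne : Nonempty (Fin m) := hc.nonempty
  exact Connected.mk fun u w => key (hc.preconnected u w).some

lemma connected_card_le {m : ℕ} : ∀ (k : ℕ) (G : SimpleGraph (Fin m)), en G = k →
    G.Connected → m ≤ k + 1 := by
  intro k
  induction k using Nat.strong_induction_on with
  | _ k ih =>
    intro G hk hc
    by_cases ha : G.IsAcyclic
    · have : G.IsTree := ⟨hc, ha⟩
      have := tree_en this
      omega
    · rw [IsAcyclic] at ha
      push_neg at ha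
      obtain ⟨v, c, hcyc⟩ := ha
      cases c with
      | nil => exact absurd hcyc (by intro h; exact h.not_nil Walk.Nil.nil)
      | @cons _ w _ h q =>
        have hmem : s(v, w) ∈ (Walk.cons h q).edges := by simp
        have hreach := (adj_and_reachable_delete_edges_iff_exists_cycle.mpr
          ⟨v, Walk.cons h q, hcyc, hmem⟩).2
        have hcon := connected_delete hc hreach
        have hen := en_delete h
        have hlt : en (G \ fromEdgeSet {s(v,w)}) < k := by omega
        have := ih _ hlt _ rfl hcon
        omega

lemma isTree_of_connected_of_card_le {m : ℕ} (G : SimpleGraph (Fin m)) (hc : G.Connected)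
    (he : en G + 1 ≤ m) : G.IsTree := by
  refine ⟨hc, ?_⟩
  by_contra ha
  rw [IsAcyclic] at ha
  push_neg at ha
  obtain ⟨v, c, hcyc⟩ := ha
  cases c with
  | nil => exact absurd hcyc (by intro h; exact h.not_nil Walk.Nil.nil)
  | @cons _ w _ h q =>
    have hmem : s(v, w) ∈ (Walk.cons h q).edges := by simp
    have hreach := (adj_and_reachable_delete_edges_iff_exists_cycle.mpr
      ⟨v, Walk.cons h q, hcyc, hmem⟩).2
    have hcon := connected_delete hc hreach
    have hen := en_delete h
    have := connected_card_le (en (G \ fromEdgeSet {s(v,w)})) _ rfl hcon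
    omega

lemma degree_pos {m : ℕ} {G : SimpleGraph (Fin m)} (hc : G.Connected) (hm : 2 ≤ m) (i : Fin m) :
    0 < G.degree i := by
  rw [degree_pos_iff_exists_adj]
  have : ∃ j : Fin m, j ≠ i := by
    have : Nontrivial (Fin m) := Fin.nontrivial_iff_two_le.mpr hm
    exact exists_ne i
  obtain ⟨j, hj⟩ := this
  obtain ⟨p⟩ := hc.preconnected i j
  cases p with
  | nil => exact absurd rfl hj.symm
  | cons h q => exact ⟨_, h⟩

open Finset

section Ext

variable {m : ℕ}

lemma cs_ne_last (a : Fin m) : a.castSucc ≠ Fin.last m := (Fin.castSucc_lt_last a).ne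

/-- extend a graph by a new last vertex attached to `j` -/
noncomputable def extG (T' : SimpleGraph (Fin m)) (j : Fin m) : SimpleGraph (Fin (m+1)) :=
  (T'.map Fin.castSuccEmb) ⊔ (SimpleGraph.edge (Fin.last m) j.castSucc)

variable {T' : SimpleGraph (Fin m)} {j : Fin m}

lemma extG_adj_last {b : Fin (m+1)} : (extG T' j).Adj (Fin.last m) b ↔ b = j.castSucc := by
  simp only [extG, sup_adj, map_adj, edge_adj, Fin.castSuccEmb_apply]
  constructor
  · rintro (⟨a', b', _, ha, _⟩ | ⟨h1 | ⟨h2, _⟩, _⟩)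
    · exact absurd ha (cs_ne_last a')
    · exact h1.2
    · exact absurd h2.symm (cs_ne_last j)
  · rintro rfl
    refine Or.inr ⟨Or.inl ?_, fun hh => cs_ne_last j hh.symm⟩
    simp

lemma extG_adj_cs {a b : Fin m} : (extG T' j).Adj a.castSucc b.castSucc ↔ T'.Adj a b := by
  simp only [extG, sup_adj, map_adj, edge_adj, Fin.castSuccEmb_apply]
  constructor
  · rintro (⟨a', b', h, ha, hb⟩ | ⟨⟨ha, _⟩ | ⟨_, hb⟩, _⟩)
    · rwa [show a' = a from Fin.castSucc_injective m ha,
           show b' = b from Fin.castSucc_injective m hb] at h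
    · exact absurd ha (cs_ne_last a)
    · exact absurd hb (cs_ne_last b)
  · exact fun h => Or.inl ⟨a, b, h, rfl, rfl⟩

lemma extG_adj_cs_last {a : Fin m} : (extG T' j).Adj a.castSucc (Fin.last m) ↔ a = j := by
  rw [SimpleGraph.adj_comm, extG_adj_last]
  exact ⟨fun h => Fin.castSucc_injective m h, fun h => h ▸ rfl⟩

lemma nbF_extG_last : (extG T' j).neighborFinset (Fin.last m) = {j.castSucc} := by
  ext w; simp [mem_neighborFinset, extG_adj_last]

lemma degree_extG_last : (extG T' j).degree (Fin.last m) = 1 := by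
  rw [degree, nbF_extG_last, Finset.card_singleton]

lemma nbF_extG_cs (a : Fin m) : (extG T' j).neighborFinset a.castSucc =
    (T'.neighborFinset a).map Fin.castSuccEmb ∪ (if a = j then {Fin.last m} else ∅) := by
  ext w
  refine Fin.lastCases ?_ ?_ w
  · simp only [mem_neighborFinset, extG_adj_cs_last, Finset.mem_union, Finset.mem_map]
    constructor
    · intro h; rw [if_pos h]; simp
    · rintro (⟨b, _, hb⟩ | h)
      · exact absurd hb (cs_ne_last b)
      · by_cases haj : a = j
        · exact haj
        · rw [if_neg haj] at h; simp at h
  · intro b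
    simp only [mem_neighborFinset, extG_adj_cs, Finset.mem_union, Finset.mem_map,
      Fin.castSuccEmb_apply]
    constructor
    · intro h; exact Or.inl ⟨b, by simp [mem_neighborFinset, h], rfl⟩
    · rintro (⟨b', hb', hb⟩ | h)
      · rw [← show b' = b from Fin.castSucc_injective m hb]
        simpa [mem_neighborFinset] using hb'
      · exfalso
        by_cases haj : a = j
        · rw [if_pos haj] at h; simp at h
        · rw [if_neg haj] at h; simp at h

lemma degree_extG_cs (a : Fin m) :
    (extG T' j).degree a.castSucc = T'.degree a + (if a = j then 1 else 0) := by
  rw [degree, nbF_extG_cs, Finset.card_union_of_disjoint, Finset.card_map]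
  · congr 1
    by_cases haj : a = j <;> simp [haj]
  · simp only [Finset.disjoint_right]
    intro w hw
    by_cases haj : a = j
    · rw [if_pos haj] at hw; simp at hw; subst hw
      simp only [Finset.mem_map]
      rintro ⟨b, _, hb⟩
      exact cs_ne_last b hb
    · rw [if_neg haj] at hw; simp at hw

lemma en_extG (hm : 0 < m) : en (extG T' j) = en T' + 1 := by
  have h1 := sum_degree_eq (extG T' j)
  have h2 := sum_degree_eq T'
  rw [Fin.sum_univ_castSucc] at h1
  simp only [degree_extG_cs, degree_extG_last] at h1
  rw [Finset.sum_add_distrib, Finset.sum_ite_eq' Finset.univ j (fun _ => 1)] at h1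
  simp only [Finset.mem_univ, if_pos] at h1
  omega

lemma connected_extG (hc : T'.Connected) : (extG T' j).Connected := by
  have hlast : ∀ u : Fin (m+1), (extG T' j).Reachable u (Fin.last m) := by
    intro u
    refine Fin.lastCases ?_ ?_ u
    · exact SimpleGraph.Reachable.refl _
    · intro a
      have h1 : (extG T' j).Reachable a.castSucc j.castSucc :=
        (hc.preconnected a j).map (⟨Fin.castSucc, fun h => extG_adj_cs.mpr h⟩ : T' →g extG T' j)
      exact h1.trans (SimpleGraph.Adj.reachable (extG_adj_cs_last.mpr rfl))
  exact SimpleGraph.Connected.mk fun u v => (hlast u).trans (hlast v).symm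

lemma isTree_extG (hT : T'.IsTree) : (extG T' j).IsTree := by
  have hm : 0 < m := by
    have := hT.isConnected.nonempty
    exact Fin.pos_iff_nonempty.mpr this
  refine isTree_of_connected_of_card_le _ (connected_extG hT.isConnected) ?_
  rw [en_extG hm]
  have := tree_en hT
  omega

end Ext

section Res

variable {m : ℕ}

/-- restrict a graph on `Fin (m+1)` to the first `m` vertices -/
noncomputable def resG (T : SimpleGraph (Fin (m+1))) : SimpleGraph (Fin m) :=
  T.comap Fin.castSucc

variable {T : SimpleGraph (Fin (m+1))} {j : Fin m}

lemma resG_adj {a b : Fin m} : (resG T).Adj a b ↔ T.Adj a.castSucc b.castSucc := Iff.rfl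

lemma uniq_nbr (hdeg : T.degree (Fin.last m) = 1) (hadj : T.Adj (Fin.last m) j.castSucc) :
    ∀ w, T.Adj (Fin.last m) w → w = j.castSucc := by
  intro w hw
  exact Finset.card_le_one.mp (le_of_eq hdeg) w ((mem_neighborFinset _ _ _).mpr hw)
    j.castSucc ((mem_neighborFinset _ _ _).mpr hadj)

lemma eq_extG (hdeg : T.degree (Fin.last m) = 1) (hadj : T.Adj (Fin.last m) j.castSucc) :
    T = extG (resG T) j := by
  have huniq := uniq_nbr hdeg hadj
  ext a b
  by_cases ha : a = Fin.last m
  · subst ha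
    rw [extG_adj_last]
    exact ⟨fun h => huniq b h, fun h => h ▸ hadj⟩
  · by_cases hb : b = Fin.last m
    · subst hb
      constructor
      · intro h
        exact ((extG_adj_last (T' := resG T) (j := j)).mpr (huniq a h.symm)).symm
      · intro h
        have h' : a = j.castSucc := extG_adj_last.mp h.symm
        rw [h']
        exact hadj.symm
    · conv_lhs => rw [show a = (a.castPred ha).castSucc from (Fin.castSucc_castPred a ha).symm,
        show b = (b.castPred hb).castSucc from (Fin.castSucc_castPred b hb).symm]
      rw [show ((extG (resG T) j).Adj a b) ↔ (extG (resG T) j).Adj (a.castPred ha).castSucc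
        (b.castPred hb).castSucc by
          rw [Fin.castSucc_castPred, Fin.castSucc_castPred]]
      rw [extG_adj_cs, resG_adj]

/-- a path between vertices distinct from `u` avoids `u` when `u` has a unique neighbor -/
lemma path_avoid {V : Type*} {G : SimpleGraph V} {u z : V}
    (h1 : ∀ w, G.Adj u w → w = z) :
    ∀ {a b : V} (p : G.Walk a b), p.IsPath → a ≠ u → b ≠ u → u ∉ p.support := by
  intro a b p
  induction p with
  | nil =>
    intro _ ha _
    simp [Ne.symm ha]
  | @cons a c b h q ih =>
    intro hp ha hb
    rw [SimpleGraph.Walk.support_cons, List.mem_cons]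
    rintro (rfl | hu)
    · exact ha rfl
    by_cases hc : c = u
    · subst hc
      have haz : a = z := h1 a h.symm
      cases q with
      | nil => exact hb (by simpa using hu)
      | @cons _ w _ h2 r =>
        have hwz : w = z := h1 w h2
        rw [SimpleGraph.Walk.cons_isPath_iff] at hp
        exact hp.2 (by
          rw [SimpleGraph.Walk.support_cons, List.mem_cons]
          right
          rw [haz, ← hwz]
          exact r.start_mem_support)
    · exact (ih (hp.of_cons) hc hb) hu
  
lemma connected_resG (hm : 0 < m) (hc : T.Connected)
    (hdeg : T.degree (Fin.last m) = 1) (hadj : T.Adj (Fin.last m) j.castSucc) :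
    (resG T).Connected := by
  have huniq : ∀ w, T.Adj (Fin.last m) w → w = j.castSucc := uniq_nbr hdeg hadj
  have key : ∀ {u v : Fin (m+1)} (p : T.Walk u v), (∀ w ∈ p.support, w ≠ Fin.last m) →
      ∀ (hu : u ≠ Fin.last m) (hv : v ≠ Fin.last m),
      (resG T).Reachable (u.castPred hu) (v.castPred hv) := by
    intro u v p
    induction p with
    | nil => intro _ hu _; exact SimpleGraph.Reachable.refl _
    | @cons u w v h q ih =>
      intro hs hu hv
      have hw : w ≠ Fin.last m := hs w (by simp)
      have h1 : (resG T).Adj (u.castPred hu) (w.castPred hw) := by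
        rw [resG_adj, Fin.castSucc_castPred, Fin.castSucc_castPred]
        exact h
      exact h1.reachable.trans (ih (fun x hx => hs x (by simp [hx])) hw hv)
  have hne : Nonempty (Fin m) := ⟨⟨0, hm⟩⟩
  refine SimpleGraph.Connected.mk fun a b => ?_
  obtain ⟨p0⟩ := hc.preconnected a.castSucc b.castSucc
  let p := p0.toPath
  have hnot : Fin.last m ∉ (p : T.Walk _ _).support :=
    path_avoid (fun w hw => huniq w hw) _ p.2 (cs_ne_last a) (cs_ne_last b)
  have := key (p : T.Walk _ _) (fun w hw => fun heq => hnot (heq ▸ hw)) (cs_ne_last a) (cs_ne_last b)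
  simpa [Fin.castPred_castSucc] using this

lemma isTree_resG (hm : 0 < m) (hT : T.IsTree)
    (hdeg : T.degree (Fin.last m) = 1) (hadj : T.Adj (Fin.last m) j.castSucc) :
    (resG T).IsTree := by
  refine isTree_of_connected_of_card_le _ (connected_resG hm hT.isConnected hdeg hadj) ?_
  have h1 : en T = en (resG T) + 1 := by
    conv_lhs => rw [eq_extG hdeg hadj]
    exact en_extG hm
  have h2 := tree_en hT
  omega

lemma degree_resG (hdeg : T.degree (Fin.last m) = 1) (hadj : T.Adj (Fin.last m) j.castSucc)
    (a : Fin m) :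
    T.degree a.castSucc = (resG T).degree a + (if a = j then 1 else 0) := by
  conv_lhs => rw [eq_extG hdeg hadj]
  exact degree_extG_cs a

/-- a tree with ≥ 3 vertices cannot have two adjacent leaves -/
lemma no_two_leaves (hm : 0 < m) (hc : T.Connected)
    (hdeg : T.degree (Fin.last m) = 1) (hadj : T.Adj (Fin.last m) j.castSucc)
    (hdegj : T.degree j.castSucc = 1) : m = 1 := by
  by_contra hm1
  have hm2 : 2 ≤ m := by omega
  have huniq : ∀ w, T.Adj (Fin.last m) w → w = j.castSucc := uniq_nbr hdeg hadj
  have huniqj : ∀ w, T.Adj j.castSucc w → w = Fin.last m := by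
    intro w hw
    exact Finset.card_le_one.mp (le_of_eq hdegj) w ((mem_neighborFinset _ _ _).mpr hw)
      (Fin.last m) ((mem_neighborFinset _ _ _).mpr hadj.symm)
  -- find a third vertex
  obtain ⟨k, hk1⟩ : ∃ k : Fin m, k ≠ j := by
    refine ⟨if h : j = ⟨0, by omega⟩ then ⟨1, by omega⟩ else ⟨0, by omega⟩, ?_⟩
    split_ifs with h
    · rw [h]; intro hh; exact absurd (congrArg Fin.val hh) (by simp)
    · exact fun hh => h hh.symm
  have hkl : k.castSucc ≠ Fin.last m := cs_ne_last k
  have hkj : k.castSucc ≠ j.castSucc := fun h => hk1 (Fin.castSucc_injective m h)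
  obtain ⟨p0⟩ := hc.preconnected (Fin.last m) k.castSucc
  obtain ⟨p, hp⟩ := p0.toPath
  obtain ⟨w, h, q, rfl⟩ := (SimpleGraph.Walk.not_nil_iff (p := p)).mp
    (SimpleGraph.Walk.not_nil_of_ne (Ne.symm hkl))
  have hwj : w = j.castSucc := huniq w h
  subst hwj
  obtain ⟨w2, h2, r, rfl⟩ := (SimpleGraph.Walk.not_nil_iff (p := q)).mp
    (SimpleGraph.Walk.not_nil_of_ne (Ne.symm hkj))
  have hw2 : w2 = Fin.last m := huniqj w2 h2
  subst hw2
  rw [SimpleGraph.Walk.cons_isPath_iff] at hp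
  exact hp.2 (by
    rw [SimpleGraph.Walk.support_cons, List.mem_cons]
    exact Or.inr r.start_mem_support)

end Res

section Relabel

variable {m : ℕ} (e : Fin m ≃ Fin m)

lemma degree_comap (T : SimpleGraph (Fin m)) (i : Fin m) :
    (T.comap e).degree i = T.degree (e i) := by
  have h : (T.comap e).neighborFinset i = (T.neighborFinset (e i)).map e.symm.toEmbedding := by
    ext w
    simp only [mem_neighborFinset, SimpleGraph.comap_adj, Finset.mem_map,
      Equiv.coe_toEmbedding]
    constructor
    · intro hw; exact ⟨e w, by simpa [mem_neighborFinset] using hw, by simp⟩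
    · rintro ⟨w', hw', rfl⟩
      simpa [mem_neighborFinset] using hw'
  rw [SimpleGraph.degree, h, Finset.card_map, SimpleGraph.degree]

lemma treeDeg_comap (T : SimpleGraph (Fin m)) (i : Fin m) :
    treeDeg (T.comap e) i = treeDeg T (e i) := by
  rw [treeDeg_eq_degree, treeDeg_eq_degree]
  convert degree_comap e T i

lemma en_comap (T : SimpleGraph (Fin m)) : en (T.comap e) = en T := by
  have h1 := sum_degree_eq (T.comap e)
  have h2 := sum_degree_eq T
  simp only [← treeDeg_eq_degree] at h1
  simp only [treeDeg_comap] at h1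
  simp only [treeDeg_eq_degree] at h1
  rw [Equiv.sum_comp e (fun i => T.degree i)] at h1
  omega

lemma connected_comap {T : SimpleGraph (Fin m)} (hc : T.Connected) : (T.comap e).Connected := by
  have hne : Nonempty (Fin m) := hc.nonempty
  refine SimpleGraph.Connected.mk fun u v => ?_
  have hsymm : ∀ {a b : Fin m}, T.Adj a b → (T.comap e).Adj (e.symm a) (e.symm b) := by
    intro a b hab; simp [SimpleGraph.comap_adj, hab]
  have key : ∀ {a b : Fin m} (p : T.Walk a b), (T.comap e).Reachable (e.symm a) (e.symm b) := by
    intro a b p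
    induction p with
    | nil => exact Reachable.refl _
    | cons h q ih => exact (SimpleGraph.Adj.reachable (hsymm h)).trans ih
  obtain ⟨p⟩ := hc.preconnected (e u) (e v)
  have := key p
  simpa using this

lemma isTree_comap {T : SimpleGraph (Fin m)} (hT : T.IsTree) : (T.comap e).IsTree := by
  refine isTree_of_connected_of_card_le _ (connected_comap e hT.isConnected) ?_
  rw [en_comap]
  exact le_of_eq (tree_en hT)

end Relabel

noncomputable def Tset (n : ℕ) (d : Fin n → ℕ) : Finset (SimpleGraph (Fin n)) :=
  (treeFinset n).filter (fun T => (fun i => treeDeg T i) = d)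

noncomputable def Fset (k n : ℕ) (d : Fin n → ℕ) : Finset (Fin k → Fin n) :=
  Finset.univ.filter (fun f => (fun i => cnt f i + 1) = d)

lemma mem_Tset {n : ℕ} {d : Fin n → ℕ} {T : SimpleGraph (Fin n)} :
    T ∈ Tset n d ↔ T.IsTree ∧ ∀ i, treeDeg T i = d i := by
  simp [Tset, treeFinset, funext_iff]

lemma mem_Fset {k n : ℕ} {d : Fin n → ℕ} {f : Fin k → Fin n} :
    f ∈ Fset k n d ↔ ∀ i, cnt f i + 1 = d i := by
  simp [Fset, funext_iff]

lemma comap_comap_self {m : ℕ} (e : Fin m ≃ Fin m) (T : SimpleGraph (Fin m)) :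
    (T.comap e).comap e.symm = T := by
  ext a b
  simp

lemma Tset_relabel {m : ℕ} (e : Fin m ≃ Fin m) (d : Fin m → ℕ) :
    (Tset m d).card = (Tset m (d ∘ e)).card := by
  refine Finset.card_bij' (fun T _ => T.comap e) (fun T _ => T.comap e.symm) ?_ ?_ ?_ ?_
  · intro T hT
    rw [mem_Tset] at hT ⊢
    exact ⟨isTree_comap e hT.1, fun i => by
      rw [treeDeg_comap e T i, hT.2 (e i)]; rfl⟩
  · intro T hT
    rw [mem_Tset] at hT ⊢
    refine ⟨isTree_comap e.symm hT.1, fun i => ?_⟩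
    rw [treeDeg_comap e.symm T i, hT.2 (e.symm i)]
    simp
  · intro T _; exact comap_comap_self e T
  · intro T _
    have := comap_comap_self e.symm T
    simpa using this

lemma cnt_comp_equiv {k n : ℕ} (e : Fin n ≃ Fin n) (f : Fin k → Fin n) (i : Fin n) :
    cnt (fun x => e (f x)) i = cnt f (e.symm i) := by
  unfold cnt
  congr 1
  apply Finset.filter_congr
  intro x _
  simp [Equiv.eq_symm_apply]

lemma Fset_relabel {k m : ℕ} (e : Fin m ≃ Fin m) (d : Fin m → ℕ) :
    (Fset k m d).card = (Fset k m (d ∘ e)).card := by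
  refine Finset.card_bij' (fun f _ => fun x => e.symm (f x)) (fun f _ => fun x => e (f x))
    ?_ ?_ ?_ ?_
  · intro f hf
    rw [mem_Fset] at hf ⊢
    intro i
    rw [cnt_comp_equiv e.symm f i]
    simp only [Equiv.symm_symm]
    exact hf (e i)
  · intro f hf
    rw [mem_Fset] at hf ⊢
    intro i
    rw [cnt_comp_equiv e f i]
    have := hf (e.symm i)
    simpa using this
  · intro f _; funext x; simp
  · intro f _; funext x; simp

/-- degree sequence decremented at `j`, restricted to first `m` coords -/
def decr {m : ℕ} (d : Fin (m+1) → ℕ) (j : Fin m) : Fin m → ℕ :=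
  fun i => if i = j then d i.castSucc - 1 else d i.castSucc

lemma Tset_empty_of_zero {n : ℕ} (hn : 2 ≤ n) {d : Fin n → ℕ} {i : Fin n} (hi : d i = 0) :
    Tset n d = ∅ := by
  rw [Finset.eq_empty_iff_forall_notMem]
  intro T hT
  rw [mem_Tset] at hT
  have := degree_pos hT.1.isConnected hn i
  have h2 := hT.2 i
  rw [treeDeg_eq_degree] at h2
  omega

lemma cnt_eq_zero {k n : ℕ} {f : Fin k → Fin n} {i : Fin n} :
    cnt f i = 0 ↔ ∀ x, f x ≠ i := by
  simp [cnt, Finset.card_eq_zero, Finset.filter_eq_empty_iff]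

lemma cnt_cons {m n : ℕ} (v : Fin n) (f : Fin m → Fin n) (i : Fin n) :
    cnt (Fin.cons v f : Fin (m+1) → Fin n) i = (if v = i then 1 else 0) + cnt f i := by
  simp only [cnt, Finset.card_filter]
  rw [Fin.sum_univ_succ]
  simp

lemma tree_step {m : ℕ} (hm : 2 ≤ m) (d : Fin (m+1) → ℕ) (hlast : d (Fin.last m) = 1) :
    (Tset (m+1) d).card = ∑ j : Fin m, (Tset m (decr d j)).card := by
  classical
  set nbr : SimpleGraph (Fin (m+1)) → Fin m := fun T =>
    if h : ∃ j : Fin m, T.Adj (Fin.last m) j.castSucc then h.choose else ⟨0, by omega⟩ with hnbr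
  have hmaps : ∀ T ∈ Tset (m+1) d, nbr T ∈ (Finset.univ : Finset (Fin m)) := fun _ _ => by simp
  rw [Finset.card_eq_sum_card_fiberwise hmaps]
  refine Finset.sum_congr rfl fun j _ => ?_
  have hfiber : (Tset (m+1) d).filter (fun T => nbr T = j)
      = (Tset (m+1) d).filter (fun T => T.Adj (Fin.last m) j.castSucc) := by
    apply Finset.filter_congr
    intro T hT
    rw [mem_Tset] at hT
    have hdeg : T.degree (Fin.last m) = 1 :=
      ((treeDeg_eq_degree _ _).symm.trans (hT.2 _)).trans hlast
    have hex : ∃ j' : Fin m, T.Adj (Fin.last m) j'.castSucc := by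
      have hpos : 0 < T.degree (Fin.last m) := by omega
      obtain ⟨w, hw⟩ := (SimpleGraph.degree_pos_iff_exists_adj _ _).mp hpos
      have hwne : w ≠ Fin.last m := (T.ne_of_adj hw).symm
      exact ⟨w.castPred hwne, by rwa [Fin.castSucc_castPred]⟩
    have hspec : T.Adj (Fin.last m) (hex.choose).castSucc := hex.choose_spec
    have hval : nbr T = hex.choose := by
      simp only [hnbr]
      rw [dif_pos hex]
    constructor
    · intro h
      rw [hval] at h
      rw [← h]
      exact hspec
    · intro hadj
      rw [hval]
      exact Fin.castSucc_injective m (uniq_nbr hdeg hadj _ hspec)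
  rw [hfiber]
  by_cases hj2 : 2 ≤ d j.castSucc
  · refine Finset.card_bij' (fun T _ => resG T) (fun T' _ => extG T' j) ?_ ?_ ?_ ?_
    · intro T hTmem
      show resG T ∈ Tset m (decr d j)
      rw [Finset.mem_filter] at hTmem
      obtain ⟨hT, hadj⟩ := hTmem
      rw [mem_Tset] at hT ⊢
      have hdeg : T.degree (Fin.last m) = 1 :=
        ((treeDeg_eq_degree _ _).symm.trans (hT.2 _)).trans hlast
      refine ⟨isTree_resG (by omega) hT.1 hdeg hadj, fun a => ?_⟩
      have hrel := degree_resG hdeg hadj a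
      rw [← treeDeg_eq_degree] at hrel
      rw [hT.2 a.castSucc] at hrel
      rw [treeDeg_eq_degree]
      unfold decr
      by_cases haj : a = j
      · rw [if_pos haj]; rw [if_pos haj] at hrel; omega
      · rw [if_neg haj]; rw [if_neg haj] at hrel; omega
    · intro T' hT'mem
      show extG T' j ∈ (Tset (m+1) d).filter (fun T => T.Adj (Fin.last m) j.castSucc)
      rw [mem_Tset] at hT'mem
      rw [Finset.mem_filter, mem_Tset]
      refine ⟨⟨isTree_extG hT'mem.1, fun i => ?_⟩, extG_adj_last.mpr rfl⟩
      rw [treeDeg_eq_degree]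
      refine Fin.lastCases ?_ ?_ i
      · rw [degree_extG_last, hlast]
      · intro a
        rw [degree_extG_cs, ← treeDeg_eq_degree, hT'mem.2 a]
        unfold decr
        by_cases haj : a = j
        · rw [if_pos haj, if_pos haj]; subst haj; omega
        · rw [if_neg haj, if_neg haj]; omega
    · intro T hTmem
      show extG (resG T) j = T
      rw [Finset.mem_filter] at hTmem
      obtain ⟨hT, hadj⟩ := hTmem
      rw [mem_Tset] at hT
      exact (eq_extG (((treeDeg_eq_degree _ _).symm.trans (hT.2 _)).trans hlast) hadj).symm
    · intro T' _
      show resG (extG T' j) = T'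
      ext a b
      rw [resG_adj, extG_adj_cs]
  · have h1 : (Tset m (decr d j)).card = 0 := by
      rw [Finset.card_eq_zero]
      apply Tset_empty_of_zero hm (i := j)
      unfold decr
      rw [if_pos rfl]
      omega
    have h2 : ((Tset (m+1) d).filter (fun T => T.Adj (Fin.last m) j.castSucc)).card = 0 := by
      rw [Finset.card_eq_zero, Finset.eq_empty_iff_forall_notMem]
      intro T hT
      rw [Finset.mem_filter, mem_Tset] at hT
      obtain ⟨⟨htree, hdegs⟩, hadj⟩ := hT
      have hdeg : T.degree (Fin.last m) = 1 :=
        ((treeDeg_eq_degree _ _).symm.trans (hdegs _)).trans hlast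
      have hdj : T.degree j.castSucc = d j.castSucc :=
        (treeDeg_eq_degree _ _).symm.trans (hdegs _)
      have hpos := degree_pos htree.isConnected (by omega) j.castSucc
      have hdj1 : T.degree j.castSucc = 1 := by omega
      have := no_two_leaves (by omega) htree.isConnected hdeg hadj hdj1
      omega
    omega

lemma fun_step {k m : ℕ} (hm : 0 < m) (d : Fin (m+1) → ℕ) (hlast : d (Fin.last m) = 1) :
    (Fset (k+1) (m+1) d).card = ∑ j : Fin m, (Fset k m (decr d j)).card := by
  classical
  have hnolast : ∀ f ∈ Fset (k+1) (m+1) d, ∀ x, f x ≠ Fin.last m := by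
    intro f hf
    rw [mem_Fset] at hf
    have := hf (Fin.last m)
    rw [hlast] at this
    exact cnt_eq_zero.mp (by omega)
  set down : Fin (m+1) → Fin m := fun v =>
    if h : v = Fin.last m then ⟨0, hm⟩ else v.castPred h with hdown
  have hdown_cs : ∀ v : Fin m, down v.castSucc = v := by
    intro v
    simp only [hdown]
    rw [dif_neg (cs_ne_last v), Fin.castPred_castSucc]
  have hdown_eq : ∀ (v : Fin (m+1)) (hv : v ≠ Fin.last m), down v = v.castPred hv := by
    intro v hv
    simp only [hdown]
    rw [dif_neg hv]
  have hmaps : ∀ f ∈ Fset (k+1) (m+1) d, down (f 0) ∈ (Finset.univ : Finset (Fin m)) :=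
    fun _ _ => by simp
  rw [Finset.card_eq_sum_card_fiberwise hmaps]
  refine Finset.sum_congr rfl fun j _ => ?_
  have hfiber : (Fset (k+1) (m+1) d).filter (fun f => down (f 0) = j)
      = (Fset (k+1) (m+1) d).filter (fun f => f 0 = j.castSucc) := by
    apply Finset.filter_congr
    intro f hf
    have h0 : f 0 ≠ Fin.last m := hnolast f hf 0
    rw [hdown_eq (f 0) h0]
    constructor
    · intro h
      rw [← h, Fin.castSucc_castPred]
    · intro h
      have : (f 0).castPred h0 = (j.castSucc).castPred (cs_ne_last j) := by
        congr 1
      rw [this, Fin.castPred_castSucc]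
  rw [hfiber]
  refine Finset.card_bij' (fun f _ => fun x => down (f x.succ))
    (fun g _ => Fin.cons j.castSucc (fun x => (g x).castSucc)) ?_ ?_ ?_ ?_
  · intro f hfmem
    show (fun x => down (f x.succ)) ∈ Fset k m (decr d j)
    rw [Finset.mem_filter] at hfmem
    obtain ⟨hf, h0⟩ := hfmem
    have hnl := hnolast f hf
    rw [mem_Fset] at hf ⊢
    intro i
    have hcnt : cnt f i.castSucc = (if j = i then 1 else 0) + cnt (fun x => down (f x.succ)) i := by
      unfold cnt
      rw [Finset.card_filter, Finset.card_filter, Fin.sum_univ_succ]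
      congr 1
      · rw [h0]
        by_cases hji : j = i
        · rw [if_pos hji, if_pos (by rw [hji])]
        · rw [if_neg hji, if_neg (fun hh => hji (Fin.castSucc_injective m hh))]
      · apply Finset.sum_congr rfl
        intro x _
        congr 1
        rw [eq_iff_iff]
        constructor
        · intro hh
          show down (f x.succ) = i
          rw [hh, hdown_cs]
        · intro hh
          replace hh : down (f x.succ) = i := hh
          have hne := hnl x.succ
          rw [hdown_eq _ hne] at hh
          rw [← hh, Fin.castSucc_castPred]
    have hi := hf i.castSucc
    rw [hcnt] at hi
    unfold decr
    by_cases hij : i = j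
    · rw [if_pos hij]; rw [if_pos (by rw [hij])] at hi; omega
    · rw [if_neg hij]; rw [if_neg (fun hh => hij hh.symm)] at hi; omega
  · intro g hgmem
    show (Fin.cons j.castSucc (fun x => (g x).castSucc) : Fin (k+1) → Fin (m+1))
      ∈ (Fset (k+1) (m+1) d).filter (fun f => f 0 = j.castSucc)
    rw [mem_Fset] at hgmem
    rw [Finset.mem_filter, mem_Fset]
    constructor
    · intro i
      refine Fin.lastCases ?_ ?_ i
      · rw [hlast]
        have hz : cnt (Fin.cons j.castSucc (fun x => (g x).castSucc) : Fin (k+1) → Fin (m+1))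
            (Fin.last m) = 0 := by
          rw [cnt_eq_zero]
          intro x
          refine Fin.cases ?_ ?_ x
          · rw [Fin.cons_zero]; exact cs_ne_last j
          · intro x'; rw [Fin.cons_succ]; exact cs_ne_last _
        omega
      · intro a
        have hcnt : cnt (Fin.cons j.castSucc (fun x => (g x).castSucc) : Fin (k+1) → Fin (m+1))
            a.castSucc = (if j = a then 1 else 0) + cnt g a := by
          rw [cnt_cons]
          congr 1
          · by_cases hja : j = a
            · rw [if_pos (by rw [hja]), if_pos hja]
            · rw [if_neg (fun hh => hja (Fin.castSucc_injective m hh)), if_neg hja]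
          · unfold cnt
            congr 1
            apply Finset.filter_congr
            intro x _
            exact (Fin.castSucc_injective m).eq_iff
        rw [hcnt]
        have hga := hgmem a
        unfold decr at hga
        by_cases haj : a = j
        · rw [if_pos haj] at hga; rw [if_pos (by rw [haj])]
          omega
        · rw [if_neg haj] at hga; rw [if_neg (fun hh => haj hh.symm)]
          omega
    · rw [Fin.cons_zero]
  · intro f hfmem
    show Fin.cons j.castSucc (fun x => (down (f x.succ)).castSucc) = f
    rw [Finset.mem_filter] at hfmem
    obtain ⟨hf, h0⟩ := hfmem
    have hnl := hnolast f hf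
    funext x
    refine Fin.cases ?_ ?_ x
    · rw [Fin.cons_zero, h0]
    · intro x'
      rw [Fin.cons_succ]
      have hne := hnl x'.succ
      rw [hdown_eq _ hne, Fin.castSucc_castPred]
  · intro g _
    show (fun x => down ((Fin.cons j.castSucc (fun y => (g y).castSucc) : Fin (k+1) → Fin (m+1))
      x.succ)) = g
    funext x
    rw [Fin.cons_succ, hdown_cs]

lemma acyclic_two (G : SimpleGraph (Fin 2)) : G.IsAcyclic := by
  intro v c hc
  have h3 := hc.three_le_length
  have hn : c.support.tail.Nodup := hc.support_nodup
  have hlen : c.support.tail.length ≤ 2 := by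
    have := hn.length_le_card
    simpa using this
  have hlen2 : c.support.tail.length = c.length := by
    rw [List.length_tail, SimpleGraph.Walk.length_support]
    omega
  omega

lemma treeFinset_two : treeFinset 2 = {(⊤ : SimpleGraph (Fin 2))} := by
  ext G
  simp only [treeFinset, Finset.mem_filter, Finset.mem_univ, true_and, Finset.mem_singleton]
  constructor
  · intro hG
    obtain ⟨p⟩ := hG.isConnected.preconnected 0 1
    obtain ⟨w, h, q, _⟩ := (SimpleGraph.Walk.not_nil_iff (p := p)).mp
      (SimpleGraph.Walk.not_nil_of_ne (by decide))
    have hw2 : w = 1 := by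
      have h2 : w ≠ 0 := Ne.symm h.ne
      have h3 : (w : ℕ) ≠ 0 := fun hh => h2 (Fin.ext hh)
      have h4 : (w : ℕ) < 2 := w.isLt
      exact Fin.ext (by omega)
    subst hw2
    ext a b
    simp only [SimpleGraph.top_adj]
    constructor
    · exact fun hab => hab.ne
    · intro hab
      have hcase : ∀ a b : Fin 2, a ≠ b → (a = 0 ∧ b = 1) ∨ (a = 1 ∧ b = 0) := by decide
      rcases hcase a b hab with ⟨rfl, rfl⟩ | ⟨rfl, rfl⟩
      · exact h
      · exact h.symm
  · rintro rfl
    exact ⟨SimpleGraph.connected_top, acyclic_two _⟩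

lemma main_base (d : Fin 2 → ℕ) : (Tset 2 d).card = (Fset 0 2 d).card := by
  have htop : ∀ i : Fin 2, treeDeg (⊤ : SimpleGraph (Fin 2)) i = 1 := by
    intro i
    have hset : (⊤ : SimpleGraph (Fin 2)).neighborSet i = {i + 1} := by
      ext w
      simp only [SimpleGraph.mem_neighborSet, SimpleGraph.top_adj, Set.mem_singleton_iff]
      revert i w
      decide
    rw [treeDeg, hset, Nat.card_coe_set_eq, Set.ncard_singleton]
  have hcnt0 : ∀ (f : Fin 0 → Fin 2) (i : Fin 2), cnt f i = 0 := by
    intro f i; simp [cnt]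
  have huniv : (Finset.univ : Finset (Fin 0 → Fin 2)) = {fun x => x.elim0} := by
    apply Finset.eq_singleton_iff_unique_mem.mpr
    exact ⟨Finset.mem_univ _, fun f _ => funext fun x => x.elim0⟩
  rw [Tset, treeFinset_two, Finset.filter_singleton, Fset, huniv, Finset.filter_singleton]
  by_cases hd : ∀ i : Fin 2, d i = 1
  · rw [if_pos (funext fun i => by rw [htop i, hd i]),
      if_pos (funext fun i => by rw [hcnt0, hd i])]
    simp
  · rw [if_neg (fun hcond => hd fun i => by
        rw [← congrFun hcond i, htop i]),
      if_neg (fun hcond => hd fun i => by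
        rw [← congrFun hcond i, hcnt0])]
    rfl

lemma main_count : ∀ k : ℕ, ∀ d : Fin (k+2) → ℕ, (Tset (k+2) d).card = (Fset k (k+2) d).card := by
  intro k
  induction k with
  | zero => exact main_base
  | succ k ih =>
    intro d
    by_cases h0 : ∀ i, 1 ≤ d i
    · by_cases hsum : ∑ i, d i = 2 * (k + 2)
      · obtain ⟨ℓ, hℓ⟩ : ∃ ℓ, d ℓ = 1 := by
          by_contra hno
          push_neg at hno
          have h2 : ∀ i, 2 ≤ d i := fun i => by
            have := h0 i; have := hno i; omega
          have hge : 2 * (k+3) ≤ ∑ i, d i := by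
            calc 2 * (k+3) = ∑ _i : Fin (k+3), 2 := by
                  rw [Finset.sum_const]; simp [mul_comm]
            _ ≤ ∑ i, d i := Finset.sum_le_sum (fun i _ => h2 i)
          omega
        set e := Equiv.swap ℓ (Fin.last (k+2)) with he
        rw [Tset_relabel e d, Fset_relabel e d]
        have hlast' : (d ∘ e) (Fin.last (k+2)) = 1 := by
          simp only [Function.comp_apply, he, Equiv.swap_apply_right, hℓ]
        rw [tree_step (by omega) (d ∘ e) hlast', fun_step (by omega) (d ∘ e) hlast']
        exact Finset.sum_congr rfl fun j _ => ih (decr (d ∘ e) j)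
      · have hT : Tset (k+3) d = ∅ := by
          rw [Finset.eq_empty_iff_forall_notMem]
          intro T hT
          rw [mem_Tset] at hT
          have hen := tree_en hT.1
          have hsd := sum_degree_eq T
          have heq : ∑ i, treeDeg T i = ∑ i, d i := Finset.sum_congr rfl fun i _ => hT.2 i
          have heq2 : ∑ i, T.degree i = ∑ i, treeDeg T i :=
            Finset.sum_congr rfl fun i _ => (treeDeg_eq_degree _ _).symm
          omega
        have hF : Fset (k+1) (k+3) d = ∅ := by
          rw [Finset.eq_empty_iff_forall_notMem]
          intro f hf
          rw [mem_Fset] at hf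
          have h1 : ∑ i, (cnt f i + 1) = ∑ i, d i := Finset.sum_congr rfl fun i _ => hf i
          have h2 : ∑ _i : Fin (k+3), 1 = k+3 := by simp
          rw [Finset.sum_add_distrib, sum_cnt, h2] at h1
          omega
        rw [hT, hF]
        rfl
    · push_neg at h0
      obtain ⟨i, hi⟩ := h0
      have hi0 : d i = 0 := by omega
      rw [Tset_empty_of_zero (by omega) hi0]
      have hF : Fset (k+1) (k+3) d = ∅ := by
        rw [Finset.eq_empty_iff_forall_notMem]
        intro f hf
        rw [mem_Fset] at hf
        have := hf i
        omega
      rw [hF]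
      rfl

lemma ascFac_zero (x : ℝ) : ascFac x 0 = 1 := by simp [ascFac]

lemma ascFac_succ (x : ℝ) (m : ℕ) : ascFac x (m+1) = ascFac x m * (x + m) := by
  simp [ascFac, Finset.prod_range_succ]

lemma ascFac_succ' (x : ℝ) (m : ℕ) : ascFac x (m+1) = x * ascFac (x+1) m := by
  rw [ascFac, Finset.prod_range_succ', ascFac, mul_comm]
  congr 1
  · simp
  · exact Finset.prod_congr rfl fun j _ => by push_cast; ring


lemma funsum_ascFac (n : ℕ) (y : Fin n → ℝ) :
    ∀ m : ℕ, ∑ f : Fin m → Fin n, ∏ i, ascFac (y i) (cnt f i) = ascFac (∑ i, y i) m := by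
  intro m
  induction m with
  | zero =>
    have h1 : ∀ f : Fin 0 → Fin n, ∏ i, ascFac (y i) (cnt f i) = 1 := by
      intro f; simp [cnt, ascFac_zero]
    simp only [h1]
    simp [ascFac_zero]
  | succ m ih =>
    rw [ascFac_succ, ← ih]
    rw [← (Fin.consEquiv (fun _ : Fin (m+1) => Fin n)).sum_comp
      (fun f => ∏ i, ascFac (y i) (cnt f i))]
    rw [Fintype.sum_prod_type]
    have key : ∀ (v : Fin n) (f : Fin m → Fin n),
        ∏ i, ascFac (y i) (cnt (Fin.cons v f : Fin (m+1) → Fin n) i)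
          = (y v + cnt f v) * ∏ i, ascFac (y i) (cnt f i) := by
      intro v f
      rw [← Finset.mul_prod_erase Finset.univ _ (Finset.mem_univ v),
          ← Finset.mul_prod_erase Finset.univ (fun i => ascFac (y i) (cnt f i)) (Finset.mem_univ v)]
      have h1 : cnt (Fin.cons v f : Fin (m+1) → Fin n) v = cnt f v + 1 := by
        rw [cnt_cons]; simp [add_comm]
      have h2 : ∏ i ∈ Finset.univ.erase v, ascFac (y i) (cnt (Fin.cons v f : Fin (m+1) → Fin n) i)
          = ∏ i ∈ Finset.univ.erase v, ascFac (y i) (cnt f i) := by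
        refine Finset.prod_congr rfl fun i hi => ?_
        rw [cnt_cons, if_neg, zero_add]
        intro h; subst h; simp at hi
      rw [h1, h2, ascFac_succ]
      ring
    calc ∑ v : Fin n, ∑ f : Fin m → Fin n,
          ∏ i, ascFac (y i) (cnt (Fin.consEquiv (fun _ : Fin (m+1) => Fin n) (v, f)) i)
        = ∑ f : Fin m → Fin n, ∑ v : Fin n, (y v + cnt f v) * ∏ i, ascFac (y i) (cnt f i) := by
          rw [Finset.sum_comm]
          exact Finset.sum_congr rfl fun f _ => Finset.sum_congr rfl fun v _ => key v f
      _ = (∑ f : Fin m → Fin n, ∏ i, ascFac (y i) (cnt f i)) * (∑ i, y i + m) := by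
          rw [Finset.sum_mul]
          apply Finset.sum_congr rfl
          intro f _
          rw [← Finset.sum_mul, mul_comm]
          congr 1
          rw [Finset.sum_add_distrib]
          congr 1
          rw [← Nat.cast_sum, sum_cnt]


/-- The weighted Leroux–Miloudi / Cayley-type identity for plane trees:
`∑_{T ∈ T_n} ∏_i x_i (x_i+1) ⋯ (x_i + d_T(i) - 1)
  = (∏ i, x i) * ∏_{j=n}^{2n-3} ((∑ i, x i) + j)`. -/
theorem weighted_leroux_miloudi (n : ℕ) (hn : 2 ≤ n) (x : Fin n → ℝ) :
    ∑ T ∈ treeFinset n, ∏ i, ascFac (x i) (treeDeg T i) =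
      (∏ i, x i) * ∏ j ∈ Finset.Icc n (2 * n - 3), ((∑ i, x i) + j) := by
  classical
  obtain ⟨k, rfl⟩ : ∃ k, n = k + 2 := ⟨n - 2, by omega⟩
  set D : Finset (Fin (k+2) → ℕ) :=
    ((treeFinset (k+2)).image (fun T => fun i => treeDeg T i)) ∪
    ((Finset.univ : Finset (Fin k → Fin (k+2))).image (fun f => fun i => cnt f i + 1)) with hD
  have hmapT : ∀ T ∈ treeFinset (k+2), (fun i => treeDeg T i) ∈ D := by
    intro T hT; rw [hD]; exact Finset.mem_union_left _ (Finset.mem_image_of_mem _ hT)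
  have hmapF : ∀ f ∈ (Finset.univ : Finset (Fin k → Fin (k+2))),
      (fun i => cnt f i + 1) ∈ D := by
    intro f hf; rw [hD]; exact Finset.mem_union_right _ (Finset.mem_image_of_mem _ hf)
  have hLHS : ∑ T ∈ treeFinset (k+2), ∏ i, ascFac (x i) (treeDeg T i)
      = ∑ d ∈ D, ((Tset (k+2) d).card : ℝ) * ∏ i, ascFac (x i) (d i) := by
    rw [← Finset.sum_fiberwise_of_maps_to hmapT (fun T => ∏ i, ascFac (x i) (treeDeg T i))]
    refine Finset.sum_congr rfl fun d _ => ?_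
    show ∑ T ∈ Tset (k+2) d, ∏ i, ascFac (x i) (treeDeg T i) = _
    have hcong : ∀ T ∈ Tset (k+2) d,
        ∏ i, ascFac (x i) (treeDeg T i) = ∏ i, ascFac (x i) (d i) := by
      intro T hT
      rw [mem_Tset] at hT
      exact Finset.prod_congr rfl fun i _ => by rw [hT.2 i]
    rw [Finset.sum_congr rfl hcong, Finset.sum_const, nsmul_eq_mul]
  have hFUN : ∑ f : Fin k → Fin (k+2), ∏ i, ascFac (x i) (cnt f i + 1)
      = ∑ d ∈ D, ((Fset k (k+2) d).card : ℝ) * ∏ i, ascFac (x i) (d i) := by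
    rw [← Finset.sum_fiberwise_of_maps_to hmapF (fun f => ∏ i, ascFac (x i) (cnt f i + 1))]
    refine Finset.sum_congr rfl fun d _ => ?_
    show ∑ f ∈ Fset k (k+2) d, ∏ i, ascFac (x i) (cnt f i + 1) = _
    have hcong : ∀ f ∈ Fset k (k+2) d,
        ∏ i, ascFac (x i) (cnt f i + 1) = ∏ i, ascFac (x i) (d i) := by
      intro f hf
      rw [mem_Fset] at hf
      exact Finset.prod_congr rfl fun i _ => by rw [hf i]
    rw [Finset.sum_congr rfl hcong, Finset.sum_const, nsmul_eq_mul]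
  rw [hLHS]
  have hmid : ∑ d ∈ D, ((Tset (k+2) d).card : ℝ) * ∏ i, ascFac (x i) (d i)
       = ∑ d ∈ D, ((Fset k (k+2) d).card : ℝ) * ∏ i, ascFac (x i) (d i) :=
    Finset.sum_congr rfl fun d _ => by rw [main_count k d]
  rw [hmid, ← hFUN]
  have heval : ∑ f : Fin k → Fin (k+2), ∏ i, ascFac (x i) (cnt f i + 1)
      = (∏ i, x i) * ascFac ((∑ i, x i) + (k+2)) k := by
    have h1 : ∀ f : Fin k → Fin (k+2), ∏ i, ascFac (x i) (cnt f i + 1)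
        = (∏ i, x i) * ∏ i, ascFac (x i + 1) (cnt f i) := by
      intro f
      rw [← Finset.prod_mul_distrib]
      exact Finset.prod_congr rfl fun i _ => ascFac_succ' (x i) (cnt f i)
    rw [Finset.sum_congr rfl (fun f _ => h1 f), ← Finset.mul_sum]
    congr 1
    rw [funsum_ascFac (k+2) (fun i => x i + 1) k]
    congr 1
    rw [Finset.sum_add_distrib]
    congr 1
    rw [Finset.sum_const]
    simp
  rw [heval]
  congr 1
  have h23 : 2 * (k+2) - 3 = 2*k+1 := by omega
  rw [h23, ← Finset.Ico_add_one_right_eq_Icc, show 2*k+1+1 = (k+2) + k by omega,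
    Finset.prod_Ico_eq_prod_range, show (k+2) + k - (k+2) = k by omega, ascFac]
  apply Finset.prod_congr rfl
  intro jj _
  push_cast
  ring
end Auxiliary
end

section
/- For every integer n ≥ 2 and every assignment of real numbers x_1, …, x_n, the sum over all vertex-labeled trees T on {1, …, n} of ∏_{i=1}^n [(x_i+1)(x_i+2)⋯(x_i+d_T(i)−1)] equals ∏_{j=n}^{2n−3}((∑_{i=1}^n x_i) + j), where the product over i uses the empty product 1 when d_T(i) = 1. (This is the main identity after dividing both sides by ∏_{i=1}^n x_i.) -/
open scoped Classical

set_option linter.unusedSectionVars false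
set_option maxHeartbeats 1000000

namespace WLM

variable {V : Type*} [Fintype V] [DecidableEq V]

open SimpleGraph

/-- Neighborhood as a filter over `univ` (avoids `Fintype` instance juggling). -/
noncomputable def nbr (G : SimpleGraph V) (v : V) : Finset V :=
  Finset.univ.filter (fun b => G.Adj v b)

/-- Degree, via `nbr`. -/
noncomputable def deg (G : SimpleGraph V) (v : V) : ℕ := (nbr G v).card

lemma mem_nbr {G : SimpleGraph V} {v b : V} : b ∈ nbr G v ↔ G.Adj v b := by
  simp [nbr]

lemma deg_eq_degree (G : SimpleGraph V) (v : V) : deg G v = G.degree v := by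
  rw [← SimpleGraph.card_neighborFinset_eq_degree, SimpleGraph.neighborFinset_eq_filter, deg, nbr]

/-- `G` is a tree supported on the vertex set `s`. -/
def IsTreeOn (G : SimpleGraph V) (s : Finset V) : Prop :=
  (∀ ⦃a b : V⦄, G.Adj a b → a ∈ s) ∧ (∀ a ∈ s, ∀ b ∈ s, G.Reachable a b) ∧ G.IsAcyclic

noncomputable def treesOnD (s : Finset V) (d : V → ℕ) : Finset (SimpleGraph V) :=
  Finset.univ.filter (fun G => IsTreeOn G s ∧ ∀ v ∈ s, deg G v = d v)

noncomputable def mult {l : ℕ} (f : Fin l → V) (v : V) : ℕ :=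
  (Finset.univ.filter (fun i => f i = v)).card

noncomputable def seqD (l : ℕ) (e : V → ℕ) : Finset (Fin l → V) :=
  Finset.univ.filter (fun f => ∀ v, mult f v = e v)

lemma mem_treesOnD {s : Finset V} {d : V → ℕ} {G : SimpleGraph V} :
    G ∈ treesOnD s d ↔ IsTreeOn G s ∧ ∀ v ∈ s, deg G v = d v := by
  simp [treesOnD]

lemma mem_seqD {l : ℕ} {e : V → ℕ} {f : Fin l → V} :
    f ∈ seqD l e ↔ ∀ v, mult f v = e v := by simp [seqD]

lemma sum_mult {l : ℕ} (f : Fin l → V) : ∑ v, mult f v = l := by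
  have := Finset.card_eq_sum_card_fiberwise (f := f) (s := Finset.univ) (t := Finset.univ)
    (fun x _ => Finset.mem_univ _)
  simpa [mult] using this.symm

lemma IsTreeOn.deg_pos {G : SimpleGraph V} {s : Finset V} (h : IsTreeOn G s)
    (hs : 2 ≤ s.card) {v : V} (hv : v ∈ s) : 0 < deg G v := by
  obtain ⟨u, hu, hne⟩ : ∃ u ∈ s, u ≠ v := by
    obtain ⟨a, ha, b, hb, hab⟩ := Finset.one_lt_card.mp hs
    rcases eq_or_ne a v with rfl | h'
    · exact ⟨b, hb, fun hbv => hab hbv.symm⟩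
    · exact ⟨a, ha, h'⟩
  obtain ⟨p⟩ := h.2.1 v hv u hu
  have hnil : ¬ p.Nil := SimpleGraph.Walk.not_nil_of_ne (Ne.symm hne)
  rw [deg, Finset.card_pos]
  exact ⟨_, mem_nbr.mpr (p.adj_snd hnil)⟩

lemma IsTreeOn.deg_eq_zero {G : SimpleGraph V} {s : Finset V} (h : IsTreeOn G s)
    {v : V} (hv : v ∉ s) : deg G v = 0 := by
  rw [deg, Finset.card_eq_zero, Finset.eq_empty_iff_forall_notMem]
  intro b hb
  exact hv (h.1 (mem_nbr.mp hb))

lemma adj_iff_of_nbhd_singleton {G : SimpleGraph V} {k j : V}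
    (hj : nbr G k = {j}) {b : V} : G.Adj k b ↔ b = j := by
  rw [← mem_nbr, hj, Finset.mem_singleton]

lemma two_le_deg {G : SimpleGraph V} {k a b : V} (ha : G.Adj k a) (hb : G.Adj k b)
    (hab : a ≠ b) : 2 ≤ deg G k := by
  have hsub : ({a, b} : Finset V) ⊆ nbr G k := by
    intro x hx
    rcases Finset.mem_insert.mp hx with rfl | hx
    · exact mem_nbr.mpr ha
    · rw [Finset.mem_singleton] at hx
      subst hx
      exact mem_nbr.mpr hb
  calc 2 = ({a, b} : Finset V).card := (Finset.card_pair hab).symm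
    _ ≤ _ := Finset.card_le_card hsub

lemma path_avoid_leaf {G : SimpleGraph V} {k : V} (hk : deg G k ≤ 1) :
    ∀ {u v : V} (p : G.Walk u v), p.IsPath → u ≠ k → v ≠ k → k ∉ p.support := by
  intro u v p
  induction p with
  | nil =>
    intro _ hu _ hmem
    rw [SimpleGraph.Walk.support_nil, List.mem_singleton] at hmem
    exact hu hmem.symm
  | @cons u w v h q ih =>
    intro hp hu hv hmem
    rw [SimpleGraph.Walk.support_cons, List.mem_cons] at hmem
    rw [SimpleGraph.Walk.cons_isPath_iff] at hp
    rcases eq_or_ne w k with rfl | hw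
    · have hqnil : ¬ q.Nil := SimpleGraph.Walk.not_nil_of_ne (Ne.symm hv)
      obtain ⟨z, hadj2, q2, hq2⟩ := SimpleGraph.Walk.not_nil_iff.mp hqnil
      have hz : z ∈ q.support := by
        rw [hq2, SimpleGraph.Walk.support_cons]
        exact List.mem_cons_of_mem _ q2.start_mem_support
      have hne : u ≠ z := fun he => hp.2 (he ▸ hz)
      exact absurd (two_le_deg h.symm hadj2 hne) (by omega)
    · rcases hmem with hmem | hmem
      · exact hu hmem.symm
      · exact ih hp.1 hw hv hmem

lemma acyclic_mono {G H : SimpleGraph V} (h : G ≤ H) (hH : H.IsAcyclic) : G.IsAcyclic := by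
  intro v c hc
  exact hH (c.transfer H (fun e he =>
    SimpleGraph.edgeSet_mono h (c.edges_subset_edgeSet he))) (hc.transfer _)

lemma edges_transfer_delete {G : SimpleGraph V} {k j u v : V} (p : G.Walk u v)
    (hk : k ∉ p.support) :
    ∀ e ∈ p.edges, e ∈ (G.deleteEdges {s(k, j)}).edgeSet := by
  intro e he
  have h1 : e ∈ G.edgeSet := p.edges_subset_edgeSet he
  rw [SimpleGraph.edgeSet_deleteEdges, Set.mem_diff, Set.mem_singleton_iff]
  refine ⟨h1, fun hekj => ?_⟩
  subst hekj
  exact hk (p.fst_mem_support_of_mem_edges he)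

lemma isAcyclic_sup_edge {G : SimpleGraph V} {k j : V} (hkj : k ≠ j)
    (hG : G.IsAcyclic) (hk : ∀ b, ¬ G.Adj k b) : (G ⊔ SimpleGraph.edge k j).IsAcyclic := by
  have hadjk : ∀ b, (G ⊔ SimpleGraph.edge k j).Adj k b ↔ b = j := by
    intro b
    rw [SimpleGraph.sup_adj, SimpleGraph.edge_adj]
    constructor
    · rintro (h | ⟨(⟨-, rfl⟩ | ⟨hkj', rfl⟩), hne⟩)
      · exact absurd h (hk b)
      · rfl
      · exact absurd hkj' hkj
    · rintro rfl
      exact Or.inr ⟨by tauto, hkj⟩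
  intro v c hc
  by_cases hkc : k ∈ c.support
  · have hc' := hc.rotate hkc
    set c' := c.rotate k hkc with hc'def
    obtain ⟨b, h, q, hq⟩ := SimpleGraph.Walk.not_nil_iff.mp hc'.not_nil
    rw [hq] at hc'
    rw [SimpleGraph.Walk.cons_isCycle_iff] at hc'
    have hbk : b ≠ k := h.ne'
    have hb : b = j := (hadjk b).mp h
    have hqrnil : ¬ q.reverse.Nil := SimpleGraph.Walk.not_nil_of_ne (Ne.symm hbk)
    obtain ⟨z, hz, q2, hq2⟩ := SimpleGraph.Walk.not_nil_iff.mp hqrnil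
    have hzj : z = j := (hadjk z).mp hz
    have hmem : s(k, z) ∈ q.reverse.edges := by
      rw [hq2, SimpleGraph.Walk.edges_cons]
      exact List.mem_cons_self
    rw [SimpleGraph.Walk.edges_reverse, List.mem_reverse] at hmem
    refine hc'.2 ?_
    have he : s(k, z) = s(k, b) := by rw [hzj, hb]
    rwa [he] at hmem
  · have hG' : ∀ e ∈ c.edges, e ∈ G.edgeSet := by
      intro e he
      have h1 : e ∈ (G ⊔ SimpleGraph.edge k j).edgeSet := c.edges_subset_edgeSet he
      rw [SimpleGraph.edgeSet_sup, Set.mem_union] at h1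
      rcases h1 with h1 | h1
      · exact h1
      · rw [SimpleGraph.edge_edgeSet_of_ne hkj, Set.mem_singleton_iff] at h1
        subst h1
        exact absurd (c.fst_mem_support_of_mem_edges he) hkc
    exact hG (c.transfer G hG') (hc.transfer _)

lemma nbhd_delete_other {G : SimpleGraph V} {k j v : V} (hv : v ≠ k) (hvj : v ≠ j) :
    nbr (G.deleteEdges {s(k, j)}) v = nbr G v := by
  ext b
  simp only [mem_nbr, SimpleGraph.deleteEdges_adj, Set.mem_singleton_iff, Sym2.eq_iff]
  constructor
  · rintro ⟨h, -⟩; exact h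
  · intro h
    refine ⟨h, ?_⟩
    rintro (⟨rfl, rfl⟩ | ⟨rfl, rfl⟩)
    · exact hv rfl
    · exact hvj rfl

lemma nbhd_delete_j {G : SimpleGraph V} {k j : V} (hkj : k ≠ j) :
    nbr (G.deleteEdges {s(k, j)}) j = (nbr G j).erase k := by
  ext b
  simp only [mem_nbr, SimpleGraph.deleteEdges_adj, Set.mem_singleton_iff,
    Sym2.eq_iff, Finset.mem_erase]
  constructor
  · rintro ⟨h, hne⟩
    refine ⟨fun hbk => hne ?_, h⟩
    subst hbk
    tauto
  · rintro ⟨hbk, h⟩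
    refine ⟨h, ?_⟩
    rintro (⟨hjk, -⟩ | ⟨-, rfl⟩)
    · exact hkj hjk.symm
    · exact hbk rfl

lemma nbhd_sup_k {G : SimpleGraph V} {k j : V} (hkj : k ≠ j) (hk : ∀ b, ¬ G.Adj k b) :
    nbr (G ⊔ SimpleGraph.edge k j) k = {j} := by
  ext b
  simp only [mem_nbr, SimpleGraph.sup_adj, SimpleGraph.edge_adj, Finset.mem_singleton]
  constructor
  · rintro (h | ⟨(⟨-, rfl⟩ | ⟨hkj', rfl⟩), hne⟩)
    · exact absurd h (hk b)
    · rfl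
    · exact absurd hkj' hkj
  · rintro rfl
    exact Or.inr ⟨by tauto, hkj⟩

lemma nbhd_sup_j {G : SimpleGraph V} {k j : V} (hkj : k ≠ j) :
    nbr (G ⊔ SimpleGraph.edge k j) j = insert k (nbr G j) := by
  ext b
  simp only [mem_nbr, SimpleGraph.sup_adj, SimpleGraph.edge_adj, Finset.mem_insert]
  constructor
  · rintro (h | ⟨(⟨hjk, -⟩ | ⟨-, rfl⟩), hne⟩)
    · exact Or.inr h
    · exact absurd hjk.symm hkj
    · exact Or.inl rfl
  · rintro (rfl | h)
    · exact Or.inr ⟨by tauto, Ne.symm hkj⟩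
    · exact Or.inl h

lemma nbhd_sup_other {G : SimpleGraph V} {k j v : V} (hv : v ≠ k) (hvj : v ≠ j) :
    nbr (G ⊔ SimpleGraph.edge k j) v = nbr G v := by
  ext b
  simp only [mem_nbr, SimpleGraph.sup_adj, SimpleGraph.edge_adj, Finset.mem_singleton]
  constructor
  · rintro (h | ⟨(⟨rfl, -⟩ | ⟨rfl, -⟩), -⟩)
    · exact h
    · exact absurd rfl hv
    · exact absurd rfl hvj
  · exact fun h => Or.inl h

lemma delete_sup_cancel {T : SimpleGraph V} {k j : V} (hadj : T.Adj k j) :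
    T.deleteEdges {s(k, j)} ⊔ SimpleGraph.edge k j = T := by
  ext a b
  simp only [SimpleGraph.sup_adj, SimpleGraph.deleteEdges_adj, Set.mem_singleton_iff,
    SimpleGraph.edge_adj]
  constructor
  · rintro (⟨h, -⟩ | ⟨(⟨rfl, rfl⟩ | ⟨rfl, rfl⟩), -⟩)
    · exact h
    · exact hadj
    · exact hadj.symm
  · intro h
    by_cases he : s(a, b) = s(k, j)
    · rw [Sym2.eq_iff] at he
      exact Or.inr ⟨he, h.ne⟩
    · exact Or.inl ⟨h, he⟩

lemma sup_delete_cancel {T' : SimpleGraph V} {k j : V}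
    (hk : ∀ b, ¬ T'.Adj k b) :
    (T' ⊔ SimpleGraph.edge k j).deleteEdges {s(k, j)} = T' := by
  ext a b
  simp only [SimpleGraph.deleteEdges_adj, SimpleGraph.sup_adj, SimpleGraph.edge_adj,
    Set.mem_singleton_iff]
  constructor
  · rintro ⟨h | ⟨he, -⟩, hne⟩
    · exact h
    · exact absurd (Sym2.eq_iff.mpr he) hne
  · intro h
    refine ⟨Or.inl h, fun he => ?_⟩
    rw [Sym2.eq_iff] at he
    rcases he with ⟨rfl, rfl⟩ | ⟨rfl, rfl⟩
    · exact hk b h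
    · exact hk a h.symm

/-- The unique neighbor of a degree-one vertex. -/
noncomputable def leafNbr (G : SimpleGraph V) (k : V) : V :=
  if h : ∃ j, nbr G k = {j} then h.choose else k

lemma nbhd_eq_leafNbr {G : SimpleGraph V} {k : V} (hk : deg G k = 1) :
    nbr G k = {leafNbr G k} := by
  obtain ⟨j, hj⟩ := Finset.card_eq_one.mp hk
  have h : ∃ j, nbr G k = {j} := ⟨j, hj⟩
  rw [leafNbr, dif_pos h]
  exact h.choose_spec

def dDec (d : V → ℕ) (j : V) : V → ℕ := fun v => if v = j then d v - 1 else d v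

lemma forward_mem {s : Finset V} {d : V → ℕ} {k : V} (hks : k ∈ s) (hdk : d k = 1)
    {T : SimpleGraph V} (hT : T ∈ treesOnD s d) {j : V} (hnb : nbr T k = {j}) :
    j ∈ s.erase k ∧
      T.deleteEdges {s(k, j)} ∈ treesOnD (s.erase k) (dDec d j) := by
  rw [mem_treesOnD] at hT
  obtain ⟨⟨hedge, hconn, hacyc⟩, hdeg⟩ := hT
  have hdegk : deg T k = 1 := by rw [hdeg k hks, hdk]
  have hadjkj : T.Adj k j := (adj_iff_of_nbhd_singleton hnb).mpr rfl
  have hkj : k ≠ j := hadjkj.ne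
  have hjs : j ∈ s := hedge hadjkj.symm
  have hjek : j ∈ s.erase k := Finset.mem_erase.mpr ⟨hadjkj.ne', hjs⟩
  refine ⟨hjek, ?_⟩
  rw [mem_treesOnD]
  have hT'adj : ∀ a b, (T.deleteEdges {s(k, j)}).Adj a b → a ∈ s.erase k := by
    intro a b hab
    rw [SimpleGraph.deleteEdges_adj, Set.mem_singleton_iff] at hab
    refine Finset.mem_erase.mpr ⟨?_, hedge hab.1⟩
    rintro rfl
    have hb : b = j := (adj_iff_of_nbhd_singleton hnb).mp hab.1
    exact hab.2 (by rw [hb])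
  refine ⟨⟨fun a b hab => hT'adj a b hab, ?_,
      acyclic_mono (SimpleGraph.deleteEdges_le _) hacyc⟩, ?_⟩
  · intro a ha b hb
    obtain ⟨hak, has⟩ := Finset.mem_erase.mp ha
    obtain ⟨hbk, hbs⟩ := Finset.mem_erase.mp hb
    obtain ⟨w⟩ := hconn a has b hbs
    have hknot : k ∉ (w.toPath : T.Walk a b).support :=
      path_avoid_leaf (le_of_eq hdegk) _ w.toPath.2 hak hbk
    exact ⟨(w.toPath : T.Walk a b).transfer _ (edges_transfer_delete _ hknot)⟩
  · intro v hv
    obtain ⟨hvk, hvs⟩ := Finset.mem_erase.mp hv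
    by_cases hvj : v = j
    · subst hvj
      rw [deg, nbhd_delete_j hkj, Finset.card_erase_of_mem (mem_nbr.mpr hadjkj.symm),
        ← deg, hdeg v hvs, dDec, if_pos rfl]
    · rw [deg, nbhd_delete_other hvk hvj, ← deg, hdeg v hvs, dDec, if_neg hvj]

lemma backward_mem {s : Finset V} {d : V → ℕ} {k j : V} (hks : k ∈ s) (hdk : d k = 1)
    (hd1 : ∀ v ∈ s, 1 ≤ d v) (hj : j ∈ s.erase k)
    {T' : SimpleGraph V} (hT' : T' ∈ treesOnD (s.erase k) (dDec d j)) :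
    T' ⊔ SimpleGraph.edge k j ∈ treesOnD s d := by
  rw [mem_treesOnD] at hT' ⊢
  obtain ⟨⟨hedge, hconn, hacyc⟩, hdeg⟩ := hT'
  obtain ⟨hjk, hjs⟩ := Finset.mem_erase.mp hj
  have hkj : k ≠ j := Ne.symm hjk
  have hkT' : ∀ b, ¬ T'.Adj k b := fun b hb => (Finset.mem_erase.mp (hedge hb)).1 rfl
  have hadjkj : (T' ⊔ SimpleGraph.edge k j).Adj k j := by
    rw [SimpleGraph.sup_adj, SimpleGraph.edge_adj]
    exact Or.inr ⟨by tauto, hkj⟩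
  refine ⟨⟨?_, ?_, isAcyclic_sup_edge hkj hacyc hkT'⟩, ?_⟩
  · intro a b hab
    rw [SimpleGraph.sup_adj, SimpleGraph.edge_adj] at hab
    rcases hab with h | ⟨(⟨rfl, -⟩ | ⟨rfl, -⟩), -⟩
    · exact (Finset.mem_erase.mp (hedge h)).2
    · exact hks
    · exact hjs
  · have hreach : ∀ v ∈ s, (T' ⊔ SimpleGraph.edge k j).Reachable k v := by
      intro v hvs
      by_cases hvk : v = k
      · subst hvk; exact SimpleGraph.Reachable.refl _
      · exact hadjkj.reachable.trans
          ((hconn j hj v (Finset.mem_erase.mpr ⟨hvk, hvs⟩)).mono le_sup_left)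
    intro a ha b hb
    exact ((hreach a ha).symm).trans (hreach b hb)
  · intro v hvs
    by_cases hvk : v = k
    · subst hvk
      rw [deg, nbhd_sup_k hkj hkT', Finset.card_singleton, hdk]
    by_cases hvj : v = j
    · subst hvj
      have hknmem : k ∉ nbr T' v := by
        rw [mem_nbr]
        exact fun h => hkT' v h.symm
      rw [deg, nbhd_sup_j hkj, Finset.card_insert_of_notMem hknmem, ← deg,
        hdeg v hj, dDec, if_pos rfl]
      have := hd1 v hvs
      omega
    · rw [deg, nbhd_sup_other hvk hvj, ← deg,
        hdeg v (Finset.mem_erase.mpr ⟨hvk, hvs⟩), dDec, if_neg hvj]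

lemma tree_card_step {s : Finset V} {d : V → ℕ} {k : V} (hks : k ∈ s) (hdk : d k = 1)
    (hd1 : ∀ v ∈ s, 1 ≤ d v) :
    (treesOnD s d).card
      = ∑ j ∈ s.erase k, (treesOnD (s.erase k) (dDec d j)).card := by
  rw [← Finset.card_sigma]
  refine Finset.card_bij'
    (fun T _ => ⟨leafNbr T k, T.deleteEdges {s(k, leafNbr T k)}⟩)
    (fun p _ => p.2 ⊔ SimpleGraph.edge k p.1) ?_ ?_ ?_ ?_
  · intro T hT
    rw [Finset.mem_sigma]
    have hdegk : deg T k = 1 := by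
      rw [(mem_treesOnD.mp hT).2 k hks, hdk]
    exact forward_mem hks hdk hT (nbhd_eq_leafNbr hdegk)
  · intro p hp
    rw [Finset.mem_sigma] at hp
    exact backward_mem hks hdk hd1 hp.1 hp.2
  · intro T hT
    have hdegk : deg T k = 1 := by
      rw [(mem_treesOnD.mp hT).2 k hks, hdk]
    exact delete_sup_cancel ((adj_iff_of_nbhd_singleton (nbhd_eq_leafNbr hdegk)).mpr rfl)
  · rintro ⟨j, T'⟩ hp
    rw [Finset.mem_sigma] at hp
    obtain ⟨hj, hT'⟩ := hp
    rw [mem_treesOnD] at hT'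
    have hkT' : ∀ b, ¬ T'.Adj k b :=
      fun b hb => (Finset.mem_erase.mp (hT'.1.1 hb)).1 rfl
    have hkj : k ≠ j := fun h => (Finset.mem_erase.mp hj).1 h.symm
    have hnb : nbr (T' ⊔ SimpleGraph.edge k j) k = {j} := nbhd_sup_k hkj hkT'
    have hdeg1 : deg (T' ⊔ SimpleGraph.edge k j) k = 1 := by
      rw [deg, hnb, Finset.card_singleton]
    have hL : leafNbr (T' ⊔ SimpleGraph.edge k j) k = j := by
      have h2 := nbhd_eq_leafNbr hdeg1
      rw [hnb] at h2
      exact Finset.singleton_injective h2.symm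
    simp only [hL, sup_delete_cancel hkT']

lemma mult_snoc {l : ℕ} (g : Fin l → V) (j v : V) :
    mult (Fin.snoc g j) v = mult g v + if j = v then 1 else 0 := by
  rw [mult, mult, Finset.card_filter, Finset.card_filter, Fin.sum_univ_castSucc]
  simp

lemma mult_init {l : ℕ} (f : Fin (l + 1) → V) (v : V) :
    mult f v = mult (Fin.init f) v + if f (Fin.last l) = v then 1 else 0 := by
  conv_lhs => rw [← Fin.snoc_init_self f]
  rw [mult_snoc]

lemma sum_e_univ {s : Finset V} {e : V → ℕ} (hout : ∀ v ∉ s, e v = 0) :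
    ∑ v, e v = ∑ v ∈ s, e v := by
  symm
  apply Finset.sum_subset (Finset.subset_univ s)
  intro v _ hv
  exact hout v hv

lemma seq_card_step {s : Finset V} {k : V} {l : ℕ} (e : V → ℕ)
    (hek : e k = 0) (hout : ∀ v ∉ s, e v = 0)
    (hsum : ∑ v ∈ s, e v = l + 1) :
    (seqD (l + 1) e).card
      = ∑ j ∈ s.erase k, (seqD l (fun v => if v = j then e v - 1 else e v)).card := by
  have hsum_univ : ∑ v, e v = l + 1 := by rw [sum_e_univ hout, hsum]
  rw [← Finset.card_sigma]
  refine Finset.card_bij'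
    (fun f _ => ⟨f (Fin.last l), Fin.init f⟩)
    (fun p _ => Fin.snoc p.2 p.1) ?_ ?_ ?_ ?_
  · intro f hf
    rw [mem_seqD] at hf
    rw [Finset.mem_sigma]
    have hmem : 1 ≤ mult f (f (Fin.last l)) := by
      rw [mult]
      exact Finset.card_pos.mpr ⟨Fin.last l, by simp⟩
    have he1 : 1 ≤ e (f (Fin.last l)) := by rw [← hf]; exact hmem
    constructor
    · show f (Fin.last l) ∈ s.erase k
      rw [Finset.mem_erase]
      constructor
      · intro h
        rw [h, hek] at he1
        omega
      · by_contra h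
        rw [hout _ h] at he1
        omega
    · show Fin.init f ∈ seqD l _
      rw [mem_seqD]
      intro v
      have hmi := mult_init f v
      rw [hf v] at hmi
      by_cases hv : v = f (Fin.last l)
      · rw [if_pos hv]
        rw [if_pos hv.symm] at hmi
        omega
      · rw [if_neg hv]
        rw [if_neg (fun h => hv h.symm)] at hmi
        omega
  · rintro ⟨j, g⟩ hp
    rw [Finset.mem_sigma] at hp
    obtain ⟨hj', hg'⟩ := hp
    have hj : j ∈ s.erase k := hj'
    have hg : g ∈ seqD l (fun v => if v = j then e v - 1 else e v) := hg'
    rw [mem_seqD] at hg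
    show Fin.snoc g j ∈ seqD (l + 1) e
    rw [mem_seqD]
    have hej : 1 ≤ e j := by
      by_contra h
      have hej0 : e j = 0 := by omega
      have h1 : ∑ v, mult g v = l := sum_mult g
      have h2 : ∑ v, mult g v = ∑ v, e v := by
        apply Finset.sum_congr rfl
        intro v _
        rw [hg v]
        by_cases hv : v = j
        · subst hv; rw [if_pos rfl, hej0]
        · rw [if_neg hv]
      omega
    intro v
    rw [mult_snoc, hg v]
    by_cases hv : v = j
    · subst hv
      rw [if_pos rfl, if_pos rfl]
      omega
    · rw [if_neg hv, if_neg (fun h => hv h.symm)]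
      omega
  · intro f _
    exact Fin.snoc_init_self f
  · rintro ⟨j, g⟩ _
    simp

lemma list_aux {α : Type*} {a : α} : ∀ {l : List α}, l.Nodup → (∀ x ∈ l, x = a) → l.length ≤ 1
  | [], _, _ => by simp
  | [_], _, _ => by simp
  | x :: y :: t, hnd, hall => by
    exfalso
    have hx : x = a := hall x (by simp)
    have hy : y = a := hall y (by simp)
    have : x ∉ y :: t := (List.nodup_cons.mp hnd).1
    exact this (by rw [hx, hy]; exact List.mem_cons_self)

lemma nbr_edge {u v : V} (huv : u ≠ v) : nbr (SimpleGraph.edge u v) u = {v} := by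
  ext b
  simp only [mem_nbr, SimpleGraph.edge_adj, Finset.mem_singleton]
  constructor
  · rintro ⟨(⟨-, rfl⟩ | ⟨rfl, rfl⟩), hne⟩
    · rfl
    · exact absurd rfl hne
  · rintro rfl
    exact ⟨by tauto, huv⟩

lemma edge_comm' (u v : V) : SimpleGraph.edge u v = SimpleGraph.edge v u := by
  ext a b
  rw [SimpleGraph.edge_adj, SimpleGraph.edge_adj]
  tauto

lemma edge_isTreeOn {u v : V} (huv : u ≠ v) {s : Finset V} (hs : s = {u, v}) :
    IsTreeOn (SimpleGraph.edge u v) s := by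
  have hadj : (SimpleGraph.edge u v).Adj u v := by
    rw [SimpleGraph.edge_adj]
    exact ⟨by tauto, huv⟩
  refine ⟨?_, ?_, ?_⟩
  · intro a b hab
    rw [SimpleGraph.edge_adj] at hab
    rcases hab with ⟨(⟨rfl, -⟩ | ⟨rfl, -⟩), -⟩
    · rw [hs]; exact Finset.mem_insert_self _ _
    · rw [hs]; exact Finset.mem_insert_of_mem (Finset.mem_singleton_self _)
  · intro a ha b hb
    rw [hs, Finset.mem_insert, Finset.mem_singleton] at ha hb
    rcases ha with rfl | rfl <;> rcases hb with rfl | rfl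
    · exact SimpleGraph.Reachable.refl _
    · exact hadj.reachable
    · exact hadj.symm.reachable
    · exact SimpleGraph.Reachable.refl _
  · intro w c hc
    have hlen := hc.three_le_length
    have hnd : c.edges.Nodup := hc.edges_nodup
    have hall : ∀ x ∈ c.edges, x = s(u, v) := by
      intro x hx
      have := c.edges_subset_edgeSet hx
      rwa [SimpleGraph.edge_edgeSet_of_ne huv, Set.mem_singleton_iff] at this
    have := list_aux hnd hall
    rw [SimpleGraph.Walk.length_edges] at this
    omega

lemma counting : ∀ m : ℕ, 2 ≤ m → ∀ s : Finset V, s.card = m → ∀ d : V → ℕ,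
    (∀ v ∈ s, 1 ≤ d v) → (∀ v ∉ s, d v = 1) → (∑ v ∈ s, d v = 2 * (m - 1)) →
    (treesOnD s d).card = (seqD (m - 2) (fun v => d v - 1)).card := by
  intro m
  induction m using Nat.strong_induction_on with
  | _ m IH =>
  intro hm2 s hcard d hd1 hout hsum
  rcases eq_or_lt_of_le hm2 with h2 | h3
  · -- base case : m = 2
    obtain ⟨u, v, huv, hs⟩ := Finset.card_eq_two.mp (by rw [hcard, ← h2])
    have hdsum : d u + d v = 2 := by
      have := hsum
      rw [hs, Finset.sum_pair huv, ← h2] at this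
      omega
    have hdu : d u = 1 := by
      have h1 := hd1 u (by rw [hs]; exact Finset.mem_insert_self _ _)
      have h2' := hd1 v (by rw [hs]; exact Finset.mem_insert_of_mem (Finset.mem_singleton_self _))
      omega
    have hdv : d v = 1 := by
      have h1 := hd1 u (by rw [hs]; exact Finset.mem_insert_self _ _)
      omega
    have htree : treesOnD s d = {SimpleGraph.edge u v} := by
      apply Finset.eq_singleton_iff_unique_mem.mpr
      constructor
      · rw [mem_treesOnD]
        refine ⟨edge_isTreeOn huv hs, ?_⟩
        intro w hw
        rw [hs] at hw
        rcases Finset.mem_insert.mp hw with rfl | hw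
        · rw [deg, nbr_edge huv, Finset.card_singleton, hdu]
        · rw [Finset.mem_singleton] at hw
          subst hw
          rw [deg, edge_comm', nbr_edge (Ne.symm huv), Finset.card_singleton, hdv]
      · intro T hT
        rw [mem_treesOnD] at hT
        obtain ⟨⟨hedge, hconn, hacyc⟩, hdeg⟩ := hT
        have hmemu : u ∈ s := by rw [hs]; exact Finset.mem_insert_self _ _
        have hmemv : v ∈ s := by
          rw [hs]; exact Finset.mem_insert_of_mem (Finset.mem_singleton_self _)
        have hTadj : T.Adj u v := by
          obtain ⟨p⟩ := hconn u hmemu v hmemv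
          have hnil : ¬ p.Nil := SimpleGraph.Walk.not_nil_of_ne huv
          obtain ⟨z, hz, q, hq⟩ := SimpleGraph.Walk.not_nil_iff.mp hnil
          have hzs : z ∈ s := hedge hz.symm
          rw [hs, Finset.mem_insert, Finset.mem_singleton] at hzs
          rcases hzs with rfl | rfl
          · exact absurd rfl hz.ne'
          · exact hz
        ext a b
        rw [SimpleGraph.edge_adj]
        constructor
        · intro h
          have has : a ∈ s := hedge h
          have hbs : b ∈ s := hedge h.symm
          rw [hs, Finset.mem_insert, Finset.mem_singleton] at has hbs
          have hab : a ≠ b := h.ne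
          rcases has with rfl | rfl <;> rcases hbs with rfl | rfl
          · exact absurd rfl hab
          · exact ⟨by tauto, hab⟩
          · exact ⟨by tauto, hab⟩
          · exact absurd rfl hab
        · rintro ⟨(⟨rfl, rfl⟩ | ⟨rfl, rfl⟩), -⟩
          · exact hTadj
          · exact hTadj.symm
    have hseq : seqD (m - 2) (fun v => d v - 1) = (Finset.univ : Finset (Fin (m - 2) → V)) := by
      apply Finset.eq_univ_iff_forall.mpr
      intro f
      rw [mem_seqD]
      intro w
      have hm0 : m - 2 = 0 := by omega
      have hmult : mult f w = 0 := by
        rw [mult, Finset.card_eq_zero, Finset.eq_empty_iff_forall_notMem]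
        intro i _
        exact absurd (hm0 ▸ i).2 (by omega)
      rw [hmult]
      by_cases hws : w ∈ s
      · rw [hs, Finset.mem_insert, Finset.mem_singleton] at hws
        rcases hws with rfl | rfl
        · omega
        · omega
      · rw [hout w hws]
    rw [htree, hseq, Finset.card_singleton, Finset.card_univ]
    have hm0 : m - 2 = 0 := by omega
    rw [hm0]
    exact (Fintype.card_eq_one_iff.mpr ⟨(fun i => absurd i.2 (by omega)), fun g => by
      funext i; exact absurd i.2 (by omega)⟩).symm
  · -- inductive step : 3 ≤ m
    obtain ⟨k, hks, hdk⟩ : ∃ k ∈ s, d k = 1 := by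
      by_contra h
      push_neg at h
      have h2 : ∀ w ∈ s, 2 ≤ d w := by
        intro w hw
        have := hd1 w hw
        have := h w hw
        omega
      have hge : 2 * m ≤ ∑ w ∈ s, d w := by
        calc 2 * m = ∑ _w ∈ s, 2 := by rw [Finset.sum_const, hcard]; ring
          _ ≤ _ := Finset.sum_le_sum h2
      omega
    obtain ⟨l, hl⟩ : ∃ l, m - 2 = l + 1 := ⟨m - 3, by omega⟩
    have hsum_e : ∑ w ∈ s, (d w - 1) = l + 1 := by
      have h1 : ∑ w ∈ s, ((d w - 1) + 1) = ∑ w ∈ s, d w := by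
        apply Finset.sum_congr rfl
        intro w hw
        have := hd1 w hw
        omega
      rw [Finset.sum_add_distrib, Finset.sum_const, smul_eq_mul, mul_one, hcard] at h1
      omega
    have hseq := seq_card_step (s := s) (k := k) (l := l) (fun w => d w - 1)
      (by show d k - 1 = 0; rw [hdk]) (fun w hw => by show d w - 1 = 0; rw [hout w hw]) hsum_e
    have hstep := tree_card_step hks hdk hd1
    rw [hstep, hl]
    refine (Finset.sum_congr rfl ?_).trans hseq.symm
    intro j hj
    obtain ⟨hjk, hjs⟩ := Finset.mem_erase.mp hj
    have hcard' : (s.erase k).card = m - 1 := by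
      rw [Finset.card_erase_of_mem hks, hcard]
    by_cases hdj : 2 ≤ d j
    · have hih := IH (m - 1) (by omega) (by omega) (s.erase k) hcard' (dDec d j)
        ?_ ?_ ?_
      · have hll : m - 1 - 2 = l := by omega
        rw [hll] at hih
        have hfun : (fun w => dDec d j w - 1)
            = (fun w => if w = j then (d w - 1) - 1 else d w - 1) := by
          funext w
          rw [dDec]
          by_cases hw : w = j
          · rw [if_pos hw, if_pos hw]
          · rw [if_neg hw, if_neg hw]
        rw [hfun] at hih
        exact hih
      · intro w hw
        obtain ⟨hwk, hws⟩ := Finset.mem_erase.mp hw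
        rw [dDec]
        by_cases hwj : w = j
        · rw [if_pos hwj, hwj]; omega
        · rw [if_neg hwj]; exact hd1 w hws
      · intro w hw
        rw [dDec]
        have hwj : w ≠ j := fun h => hw (h ▸ hj)
        rw [if_neg hwj]
        by_cases hws : w ∈ s
        · have : w = k := by
            by_contra hwk
            exact hw (Finset.mem_erase.mpr ⟨hwk, hws⟩)
          rw [this, hdk]
        · exact hout w hws
      · have h1 : ∑ w ∈ s.erase k, dDec d j w + 1 = ∑ w ∈ s.erase k, d w := by
          rw [← Finset.sum_erase_add (s.erase k) d (Finset.mem_erase.mpr ⟨hjk, hjs⟩)]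
          rw [← Finset.sum_erase_add (s.erase k) (dDec d j) (Finset.mem_erase.mpr ⟨hjk, hjs⟩)]
          have he : ∑ w ∈ (s.erase k).erase j, dDec d j w
              = ∑ w ∈ (s.erase k).erase j, d w := by
            apply Finset.sum_congr rfl
            intro w hw
            rw [dDec, if_neg (Finset.mem_erase.mp hw).1]
          rw [he, dDec, if_pos rfl]
          omega
        have h2 : ∑ w ∈ s.erase k, d w + d k = ∑ w ∈ s, d w :=
          Finset.sum_erase_add s d hks
        rw [hdk] at h2
        omega
    · have hdj1 : d j = 1 := by
        have := hd1 j hjs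
        omega
      have htree0 : (treesOnD (s.erase k) (dDec d j)).card = 0 := by
        rw [Finset.card_eq_zero, Finset.eq_empty_iff_forall_notMem]
        intro T hT
        rw [mem_treesOnD] at hT
        have hpos := hT.1.deg_pos
          (show 2 ≤ (s.erase k).card by omega) (Finset.mem_erase.mpr ⟨hjk, hjs⟩)
        rw [hT.2 j (Finset.mem_erase.mpr ⟨hjk, hjs⟩), dDec, if_pos rfl, hdj1] at hpos
        omega
      have hseq0 : (seqD l (fun w => if w = j then (d w - 1) - 1 else d w - 1)).card = 0 := by
        rw [Finset.card_eq_zero, Finset.eq_empty_iff_forall_notMem]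
        intro f hf
        rw [mem_seqD] at hf
        have h1 := sum_mult f
        have h2 : ∑ w, mult f w = ∑ w, (d w - 1) := by
          apply Finset.sum_congr rfl
          intro w _
          rw [hf w]
          by_cases hw : w = j
          · rw [if_pos hw, hw, hdj1]
          · rw [if_neg hw]
        have h3 : ∑ w, (d w - 1) = ∑ w ∈ s, (d w - 1) :=
          sum_e_univ (fun w hw => by rw [hout w hw])
        omega
      rw [htree0, hseq0]

lemma seq_sum (a : V → ℝ) : ∀ l : ℕ,
    ∑ f : Fin l → V, ∏ v, ascFac (a v) (mult f v)
      = ∏ i ∈ Finset.range l, ((∑ v, a v) + i) := by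
  intro l
  induction l with
  | zero =>
    rw [Finset.range_zero, Finset.prod_empty]
    have h1 : ∀ f : Fin 0 → V, ∏ v, ascFac (a v) (mult f v) = 1 := by
      intro f
      apply Finset.prod_eq_one
      intro v _
      have hm : mult f v = 0 := by simp [mult]
      rw [hm, ascFac, Finset.range_zero, Finset.prod_empty]
    rw [Finset.sum_congr rfl (fun f _ => h1 f), Finset.sum_const, Finset.card_univ]
    simp
  | succ l ih =>
    let e : (Fin l → V) × V ≃ (Fin (l + 1) → V) :=
      { toFun := fun p => Fin.snoc p.1 p.2,
        invFun := fun f => (Fin.init f, f (Fin.last l)),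
        left_inv := fun p => by simp,
        right_inv := fun f => Fin.snoc_init_self f }
    have hre : ∑ p : (Fin l → V) × V, ∏ v, ascFac (a v) (mult (Fin.snoc p.1 p.2) v)
        = ∑ f : Fin (l + 1) → V, ∏ v, ascFac (a v) (mult f v) :=
      Fintype.sum_equiv e _ _ (fun p => rfl)
    rw [← hre, Fintype.sum_prod_type]
    have hper : ∀ (g : Fin l → V) (j : V),
        ∏ v, ascFac (a v) (mult (Fin.snoc g j) v)
          = (∏ v, ascFac (a v) (mult g v)) * (a j + mult g j) := by
      intro g j
      have h1 : ∀ v, ascFac (a v) (mult (Fin.snoc g j) v)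
          = ascFac (a v) (mult g v + if j = v then 1 else 0) := by
        intro v; rw [mult_snoc]
      rw [Finset.prod_congr rfl (fun v _ => h1 v)]
      rw [← Finset.mul_prod_erase Finset.univ _ (Finset.mem_univ j),
        ← Finset.mul_prod_erase Finset.univ (fun v => ascFac (a v) (mult g v))
          (Finset.mem_univ j)]
      have h2 : ∀ v ∈ Finset.univ.erase j,
          ascFac (a v) (mult g v + if j = v then 1 else 0) = ascFac (a v) (mult g v) := by
        intro v hv
        rw [if_neg (fun h => (Finset.mem_erase.mp hv).1 h.symm), Nat.add_zero]
      rw [Finset.prod_congr rfl h2, if_pos rfl]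
      have h3 : ascFac (a j) (mult g j + 1) = ascFac (a j) (mult g j) * (a j + mult g j) := by
        rw [ascFac, ascFac, Finset.prod_range_succ]
      rw [h3]
      ring
    have hsum : ∀ g : Fin l → V,
        ∑ j, (∏ v, ascFac (a v) (mult g v)) * (a j + mult g j)
          = (∏ v, ascFac (a v) (mult g v)) * ((∑ v, a v) + l) := by
      intro g
      rw [← Finset.mul_sum]
      congr 1
      rw [Finset.sum_add_distrib]
      congr 1
      rw [← Nat.cast_sum]
      rw [sum_mult g]
    calc ∑ g : Fin l → V, ∑ j, ∏ v, ascFac (a v) (mult (Fin.snoc g j) v)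
        = ∑ g : Fin l → V, (∏ v, ascFac (a v) (mult g v)) * ((∑ v, a v) + l) := by
          apply Finset.sum_congr rfl
          intro g _
          rw [Finset.sum_congr rfl (fun j _ => hper g j), hsum g]
      _ = (∑ g : Fin l → V, ∏ v, ascFac (a v) (mult g v)) * ((∑ v, a v) + l) := by
          rw [← Finset.sum_mul]
      _ = ∏ i ∈ Finset.range (l + 1), ((∑ v, a v) + i) := by
          rw [ih, Finset.prod_range_succ]

lemma treeDeg_eq_deg {n : ℕ} (T : SimpleGraph (Fin n)) (i : Fin n) :
    treeDeg T i = deg T i := by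
  rw [treeDeg, Nat.card_eq_fintype_card, SimpleGraph.card_neighborSet_eq_degree, deg_eq_degree]

lemma isTreeOn_univ_iff {n : ℕ} (hn : 2 ≤ n) {T : SimpleGraph (Fin n)} :
    T.IsTree ↔ IsTreeOn T Finset.univ := by
  rw [SimpleGraph.isTree_iff]
  constructor
  · rintro ⟨hc, ha⟩
    exact ⟨fun a b _ => Finset.mem_univ a, fun a _ b _ => hc.preconnected a b, ha⟩
  · intro h
    have hne : Nonempty (Fin n) := ⟨⟨0, by omega⟩⟩
    exact ⟨{ preconnected := fun a b => h.2.1 a (Finset.mem_univ a) b (Finset.mem_univ b) },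
      h.2.2⟩

lemma tree_deg_sum {n : ℕ} {T : SimpleGraph (Fin n)} (hT : T.IsTree) :
    ∑ v, deg T v = 2 * (n - 1) := by
  classical
  have h1 := T.sum_degrees_eq_twice_card_edges
  have h2 := hT.card_edgeFinset
  rw [Fintype.card_fin] at h2
  have h3 : ∑ v, deg T v = ∑ v, T.degree v :=
    Finset.sum_congr rfl (fun v _ => deg_eq_degree T v)
  rw [h3, h1]
  omega

lemma tree_class_eq {n : ℕ} (hn : 2 ≤ n) (e : Fin n → ℕ) :
    (treeFinset n).filter (fun T => (fun v => deg T v - 1) = e)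
      = treesOnD Finset.univ (fun v => e v + 1) := by
  ext T
  rw [Finset.mem_filter, mem_treesOnD]
  have hmemtf : T ∈ treeFinset n ↔ T.IsTree := by simp [treeFinset]
  constructor
  · rintro ⟨hT, hdeg⟩
    have hT' : IsTreeOn T Finset.univ := (isTreeOn_univ_iff hn).mp (hmemtf.mp hT)
    refine ⟨hT', fun v _ => ?_⟩
    have h1 : deg T v - 1 = e v := congrFun hdeg v
    have h2 : 1 ≤ deg T v := hT'.deg_pos
      (by rw [Finset.card_univ, Fintype.card_fin]; omega) (Finset.mem_univ v)
    omega
  · rintro ⟨hT, hdeg⟩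
    refine ⟨hmemtf.mpr ((isTreeOn_univ_iff hn).mpr hT), ?_⟩
    funext v
    rw [hdeg v (Finset.mem_univ v)]
    omega

end WLM


open WLM in
/-- The main identity after dividing by `∏ i, x i`:
`∑_{T ∈ T_n} ∏_i (x_i+1)(x_i+2) ⋯ (x_i + d_T(i) - 1) = ∏_{j=n}^{2n-3} ((∑ i, x i) + j)`,
where the factor at `i` is the empty product `1` when `d_T(i) = 1`. -/
theorem weighted_leroux_miloudi_divided (n : ℕ) (hn : 2 ≤ n) (x : Fin n → ℝ) :
    ∑ T ∈ treeFinset n, ∏ i, ascFac (x i + 1) (treeDeg T i - 1) =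
      ∏ j ∈ Finset.Icc n (2 * n - 3), ((∑ i, x i) + j) := by
  classical
  have hA : ∑ i, (x i + 1) = (∑ i, x i) + n := by
    rw [Finset.sum_add_distrib, Finset.sum_const, Finset.card_univ, Fintype.card_fin,
      nsmul_eq_mul, mul_one]
  have hicc : Finset.Icc n (2 * n - 3) = (Finset.range (n - 2)).image (fun i => n + i) := by
    ext j
    simp only [Finset.mem_Icc, Finset.mem_image, Finset.mem_range]
    constructor
    · intro h
      exact ⟨j - n, by omega, by omega⟩
    · rintro ⟨i, hi, rfl⟩
      omega
  have hrhs : ∏ j ∈ Finset.Icc n (2 * n - 3), ((∑ i, x i) + (j : ℝ))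
      = ∏ i ∈ Finset.range (n - 2), ((∑ v, (x v + 1)) + i) := by
    rw [hicc, Finset.prod_image (fun a _ b _ h => by omega)]
    apply Finset.prod_congr rfl
    intro i _
    rw [hA]
    push_cast
    ring
  rw [hrhs, ← seq_sum (fun i => x i + 1) (n - 2)]
  -- rewrite treeDeg to deg
  have hlhs : ∑ T ∈ treeFinset n, ∏ i, ascFac (x i + 1) (treeDeg T i - 1)
      = ∑ T ∈ treeFinset n, ∏ i, ascFac (x i + 1) (deg T i - 1) := by
    apply Finset.sum_congr rfl
    intro T _
    exact Finset.prod_congr rfl (fun i _ => by rw [treeDeg_eq_deg])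
  rw [hlhs]
  -- fiberwise over degree classes
  set t : Finset (Fin n → ℕ) :=
    ((treeFinset n).image (fun T v => deg T v - 1))
      ∪ ((Finset.univ : Finset (Fin (n - 2) → Fin n)).image (fun f v => mult f v)) with ht
  have htreeside : ∑ T ∈ treeFinset n, ∏ i, ascFac (x i + 1) (deg T i - 1)
      = ∑ e ∈ t, (((treeFinset n).filter (fun T => (fun v => deg T v - 1) = e)).card : ℝ)
          * ∏ i, ascFac (x i + 1) (e i) := by
    rw [← Finset.sum_fiberwise_of_maps_to
      (g := fun T => (fun v => deg T v - 1)) (t := t)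
      (fun T hT => Finset.mem_union_left _ (Finset.mem_image_of_mem _ hT))
      (fun T => ∏ i, ascFac (x i + 1) (deg T i - 1))]
    apply Finset.sum_congr rfl
    intro e _
    have hinner : ∀ T ∈ (treeFinset n).filter (fun T => (fun v => deg T v - 1) = e),
        ∏ i, ascFac (x i + 1) (deg T i - 1) = ∏ i, ascFac (x i + 1) (e i) := by
      intro T hT
      obtain ⟨-, h⟩ := Finset.mem_filter.mp hT
      exact Finset.prod_congr rfl (fun i _ => by rw [congrFun h i])
    rw [Finset.sum_congr rfl hinner, Finset.sum_const, nsmul_eq_mul]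
  have hseqside : ∑ f : Fin (n - 2) → Fin n, ∏ v, ascFac (x v + 1) (mult f v)
      = ∑ e ∈ t, (((Finset.univ : Finset (Fin (n - 2) → Fin n)).filter
            (fun f => (fun v => mult f v) = e)).card : ℝ)
          * ∏ i, ascFac (x i + 1) (e i) := by
    rw [← Finset.sum_fiberwise_of_maps_to
      (g := fun f => (fun v => mult f v)) (t := t)
      (fun f hf => Finset.mem_union_right _ (Finset.mem_image_of_mem _ hf))
      (fun f => ∏ v, ascFac (x v + 1) (mult f v))]
    apply Finset.sum_congr rfl
    intro e _
    have hinner : ∀ f ∈ (Finset.univ : Finset (Fin (n - 2) → Fin n)).filter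
          (fun f => (fun v => mult f v) = e),
        ∏ v, ascFac (x v + 1) (mult f v) = ∏ i, ascFac (x i + 1) (e i) := by
      intro f hf
      obtain ⟨-, h⟩ := Finset.mem_filter.mp hf
      exact Finset.prod_congr rfl (fun i _ => by rw [congrFun h i])
    rw [Finset.sum_congr rfl hinner, Finset.sum_const, nsmul_eq_mul]
  rw [htreeside, hseqside]
  apply Finset.sum_congr rfl
  intro e _
  congr 1
  -- card equality of the classes
  have hsc : (Finset.univ : Finset (Fin (n - 2) → Fin n)).filter
      (fun f => (fun v => mult f v) = e) = seqD (n - 2) e := by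
    ext f
    rw [Finset.mem_filter, mem_seqD]
    constructor
    · rintro ⟨-, h⟩
      exact fun v => congrFun h v
    · intro h
      exact ⟨Finset.mem_univ f, funext h⟩
  rw [tree_class_eq hn e, hsc]
  by_cases hs : ∑ v, e v = n - 2
  · have hcnt := counting n hn Finset.univ
      (by rw [Finset.card_univ, Fintype.card_fin]) (fun v => e v + 1)
      (fun v _ => by show 1 ≤ e v + 1; omega) (fun v hv => absurd (Finset.mem_univ v) hv) ?_
    · have hfun : (fun v => (fun v => e v + 1) v - 1) = e := by
        funext v
        show e v + 1 - 1 = e v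
        omega
      rw [hfun] at hcnt
      rw [hcnt]
    · rw [Finset.sum_add_distrib, Finset.sum_const, Finset.card_univ, Fintype.card_fin,
        smul_eq_mul, mul_one]
      have h1 : ∑ v ∈ Finset.univ, e v = n - 2 := hs
      omega
  · have h0t : (treesOnD Finset.univ (fun v => e v + 1)).card = 0 := by
      rw [Finset.card_eq_zero, Finset.eq_empty_iff_forall_notMem]
      intro T hT
      rw [mem_treesOnD] at hT
      have hTt : T.IsTree := (isTreeOn_univ_iff hn).mpr hT.1
      have hds := tree_deg_sum hTt
      have h2 : ∑ v, deg T v = ∑ v, (e v + 1) :=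
        Finset.sum_congr rfl (fun v _ => hT.2 v (Finset.mem_univ v))
      rw [Finset.sum_add_distrib, Finset.sum_const, Finset.card_univ, Fintype.card_fin,
        smul_eq_mul, mul_one] at h2
      omega
    have h0s : (seqD (n - 2) e).card = 0 := by
      rw [Finset.card_eq_zero, Finset.eq_empty_iff_forall_notMem]
      intro f hf
      rw [mem_seqD] at hf
      have h1 := sum_mult f
      have h2 : ∑ v, mult f v = ∑ v, e v :=
        Finset.sum_congr rfl (fun v _ => hf v)
      omega
    rw [h0t, h0s]
end
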